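/- arXiv:2305.08638 — 7 statements merged into one kernel-verified Lean document; each statement's English description precedes it below -/
import Mathlib

section
/- (Inversion formula at a point, pointwise version) For nonzero coprime real polynomials P, Q and x ∈ ℝ, Ind_x^+(P,Q) + Ind_x^+(Q,P) = (1/2)·Sign evaluated just to the right of x; concretely, if Q(x) = 0 and P(x) ≠ 0 then Ind_x^+(P,Q) = (1/2)·sign(P(x)·Q_x(x)) and Ind_x^+(Q,P) = 0, so their sum equals (1/2)·lim sign of P·Q to the right of x. -/
open Polynomial

noncomputable def pPart (P : ℝ[X]) (x : ℝ) : ℝ[X] :=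
  P /ₘ (X - C x) ^ P.rootMultiplicity x

noncomputable def pval (P Q : ℝ[X]) (x : ℝ) : ℤ :=
  (P.rootMultiplicity x : ℤ) - (Q.rootMultiplicity x : ℤ)

noncomputable def SignAt (P Q : ℝ[X]) (x : ℝ) : ℝ :=
  if P ≠ 0 ∧ Q ≠ 0 ∧ pval P Q x = 0 then
    Real.sign ((pPart P x).eval x * (pPart Q x).eval x)
  else 0

noncomputable def Var (P Q : ℝ[X]) (a b : ℝ) : ℝ :=
  -(1/2) * SignAt P Q a + (1/2) * SignAt P Q b

noncomputable def IndPlus (P Q : ℝ[X]) (x : ℝ) : ℝ :=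
  if P ≠ 0 ∧ Q ≠ 0 ∧ pval P Q x < 0 then
    (1/2) * Real.sign ((pPart P x).eval x * (pPart Q x).eval x)
  else 0

noncomputable def IndMinus (P Q : ℝ[X]) (x : ℝ) : ℝ :=
  if P ≠ 0 ∧ Q ≠ 0 ∧ pval P Q x < 0 then
    (1/2) * (-1 : ℝ) ^ (pval P Q x) * Real.sign ((pPart P x).eval x * (pPart Q x).eval x)
  else 0

noncomputable def IndAt (P Q : ℝ[X]) (x : ℝ) : ℝ := IndPlus P Q x - IndMinus P Q x

noncomputable def IndSeg (P Q : ℝ[X]) (a b : ℝ) : ℝ :=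
  IndPlus P Q a + (∑ᶠ x ∈ Set.Ioo a b, IndAt P Q x) - IndMinus P Q b

noncomputable def Ind (P Q : ℝ[X]) (a b : ℝ) : ℝ :=
  if a < b then IndSeg P Q a b else if b < a then -IndSeg P Q b a else 0

def BadNumber (P Q R S : ℝ[X]) (c : ℝ) : Prop :=
  P ≠ 0 ∧ Q ≠ 0 ∧ R ≠ 0 ∧ S ≠ 0 ∧ P * S + Q * R ≠ 0 ∧
    pval P Q c = pval R S c ∧ pval P Q c < 0 ∧ pval (P * S + Q * R) (Q * S) c = 0

theorem stmt4 (P Q : ℝ[X]) (hco : IsCoprime P Q) (hP : P ≠ 0) (hQ : Q ≠ 0)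
    (x : ℝ) (hQx : Q.eval x = 0) (hPx : P.eval x ≠ 0) :
    IndPlus P Q x = (1/2) * Real.sign (P.eval x * (pPart Q x).eval x) ∧
    IndPlus Q P x = 0 ∧
    ∃ δ > (0 : ℝ), ∀ y ∈ Set.Ioo x (x + δ),
      Real.sign (P.eval y * Q.eval y) =
        Real.sign (P.eval x * (pPart Q x).eval x) := by
  have hmP : P.rootMultiplicity x = 0 := Polynomial.rootMultiplicity_eq_zero hPx
  have hmQ : 0 < Q.rootMultiplicity x := (Polynomial.rootMultiplicity_pos hQ).2 hQx
  have hpval : pval P Q x < 0 := by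
    unfold pval; rw [hmP]; push_cast; omega
  have hPpart : pPart P x = P := by
    unfold pPart; rw [hmP, pow_zero, Polynomial.divByMonic_one]
  have hQne : (pPart Q x).eval x ≠ 0 :=
    Polynomial.eval_divByMonic_pow_rootMultiplicity_ne_zero x hQ
  have h1 : IndPlus P Q x = (1/2) * Real.sign (P.eval x * (pPart Q x).eval x) := by
    unfold IndPlus
    rw [if_pos ⟨hP, hQ, hpval⟩, hPpart]
  have h2 : IndPlus Q P x = 0 := by
    unfold IndPlus
    rw [if_neg]
    rintro ⟨-, -, h⟩
    unfold pval at h; rw [hmP] at h; push_cast at h; omega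
  refine ⟨h1, h2, ?_⟩
  -- continuity argument
  set m := Q.rootMultiplicity x with hm
  set Qx := pPart Q x with hQxdef
  have hfac : (X - Polynomial.C x) ^ m * Qx = Q :=
    Polynomial.pow_mul_divByMonic_rootMultiplicity_eq Q x
  have hfne : P.eval x * Qx.eval x ≠ 0 := mul_ne_zero hPx hQne
  have hcont : Continuous (fun y => P.eval y * Qx.eval y) :=
    (Polynomial.continuous P).mul (Polynomial.continuous Qx)
  have := (hcont.tendsto x).eventually
    (eventually_abs_sub_lt (P.eval x * Qx.eval x) (abs_pos.mpr hfne))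
  rw [Metric.eventually_nhds_iff] at this
  obtain ⟨δ, hδ, hball⟩ := this
  refine ⟨δ, hδ, fun y hy => ?_⟩
  obtain ⟨hy1, hy2⟩ := hy
  have hyd : dist y x < δ := by
    rw [Real.dist_eq, abs_of_pos (by linarith)]; linarith
  have hsame : |P.eval y * Qx.eval y - P.eval x * Qx.eval x| < |P.eval x * Qx.eval x| :=
    hball hyd
  have hpow : (0:ℝ) < (y - x) ^ m := pow_pos (by linarith) m
  have hQy : Q.eval y = Qx.eval y * (y - x) ^ m := by
    rw [← hfac]; simp; ring
  rcases hfne.lt_or_gt with hneg | hpos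
  · have hyneg : P.eval y * Qx.eval y < 0 := by
      rcases abs_sub_lt_iff.mp hsame with ⟨ha, hb⟩
      rw [abs_of_neg hneg] at ha hb; linarith
    have : P.eval y * Q.eval y < 0 := by
      rw [hQy]
      calc P.eval y * (Qx.eval y * (y - x) ^ m) = (P.eval y * Qx.eval y) * (y - x) ^ m := by ring
        _ < 0 := mul_neg_of_neg_of_pos hyneg hpow
    rw [Real.sign_of_neg this, Real.sign_of_neg hneg]
  · have hypos : 0 < P.eval y * Qx.eval y := by
      rcases abs_sub_lt_iff.mp hsame with ⟨ha, hb⟩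
      rw [abs_of_pos hpos] at ha hb; linarith
    have : 0 < P.eval y * Q.eval y := by
      rw [hQy]
      calc (0:ℝ) < (P.eval y * Qx.eval y) * (y - x) ^ m := mul_pos hypos hpow
        _ = P.eval y * (Qx.eval y * (y - x) ^ m) := by ring
    rw [Real.sign_of_pos this, Real.sign_of_pos hpos]
end

section
/- (Inversion formula) Let P, Q be real polynomials and a, b ∈ ℝ. Then Ind_a^b(P,Q) + Ind_a^b(Q,P) = Var_a^b(P,Q), where Var_a^b(P,Q) = (1/2)·Sign(P,Q,b) − (1/2)·Sign(P,Q,a). -/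
open Polynomial

namespace Stmt5Aux

open Set

/-- sign of `f` just to the right of `x`. -/
noncomputable def sgnR (f : ℝ[X]) (x : ℝ) : ℝ := Real.sign ((pPart f x).eval x)

/-- sign of `f` just to the left of `x`. -/
noncomputable def sgnL (f : ℝ[X]) (x : ℝ) : ℝ :=
  (-1 : ℝ) ^ (f.rootMultiplicity x) * sgnR f x

lemma pPart_spec (f : ℝ[X]) (x : ℝ) :
    (X - C x) ^ f.rootMultiplicity x * pPart f x = f :=
  pow_mul_divByMonic_rootMultiplicity_eq f x

lemma pPart_eval_ne {f : ℝ[X]} (hf : f ≠ 0) (x : ℝ) : (pPart f x).eval x ≠ 0 :=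
  eval_divByMonic_pow_rootMultiplicity_ne_zero x hf

lemma sign_mul_pos {c p : ℝ} (hp : 0 < p) : Real.sign (c * p) = Real.sign c := by
  rcases lt_trichotomy c 0 with h | h | h
  · rw [Real.sign_of_neg h, Real.sign_of_neg (mul_neg_of_neg_of_pos h hp)]
  · simp [h]
  · rw [Real.sign_of_pos h, Real.sign_of_pos (mul_pos h hp)]

lemma sign_mul_neg {c p : ℝ} (hp : p < 0) : Real.sign (c * p) = -Real.sign c := by
  have h : c * p = -c * -p := by ring
  rw [h, sign_mul_pos (neg_pos.2 hp), Real.sign_neg]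

lemma sign_near {g : ℝ[X]} {x : ℝ} (h : g.eval x ≠ 0) :
    ∃ ε > 0, ∀ t : ℝ, |t - x| < ε → Real.sign (g.eval t) = Real.sign (g.eval x) := by
  have hc : Filter.Tendsto (fun t => g.eval t) (nhds x) (nhds (g.eval x)) :=
    (Polynomial.continuous g).continuousAt
  rcases h.lt_or_gt with h | h
  · have h2 : ∀ᶠ t in nhds x, g.eval t ∈ Set.Iio 0 := hc (Iio_mem_nhds h)
    rw [Metric.eventually_nhds_iff] at h2
    obtain ⟨ε, hε, hε'⟩ := h2
    refine ⟨ε, hε, fun t ht => ?_⟩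
    rw [Real.sign_of_neg (hε' (by rwa [Real.dist_eq])), Real.sign_of_neg h]
  · have h2 : ∀ᶠ t in nhds x, g.eval t ∈ Set.Ioi 0 := hc (Ioi_mem_nhds h)
    rw [Metric.eventually_nhds_iff] at h2
    obtain ⟨ε, hε, hε'⟩ := h2
    refine ⟨ε, hε, fun t ht => ?_⟩
    rw [Real.sign_of_pos (hε' (by rwa [Real.dist_eq])), Real.sign_of_pos h]

lemma eval_eq (f : ℝ[X]) (x t : ℝ) :
    f.eval t = (pPart f x).eval t * (t - x) ^ f.rootMultiplicity x := by
  conv_lhs => rw [← pPart_spec f x]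
  rw [eval_mul, eval_pow, eval_sub, eval_X, eval_C, mul_comm]

lemma exists_right {f : ℝ[X]} (hf : f ≠ 0) (x : ℝ) :
    ∃ ε > 0, ∀ t ∈ Ioo x (x + ε), Real.sign (f.eval t) = sgnR f x := by
  obtain ⟨ε, hε, hsign⟩ := sign_near (pPart_eval_ne hf x)
  refine ⟨ε, hε, fun t ht => ?_⟩
  have habs : |t - x| < ε := by
    rw [abs_of_pos (by linarith [ht.1])]; linarith [ht.2]
  rw [eval_eq f x t, sign_mul_pos (pow_pos (by linarith [ht.1]) _), hsign t habs]
  rfl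

lemma exists_left {f : ℝ[X]} (hf : f ≠ 0) (x : ℝ) :
    ∃ ε > 0, ∀ t ∈ Ioo (x - ε) x, Real.sign (f.eval t) = sgnL f x := by
  obtain ⟨ε, hε, hsign⟩ := sign_near (pPart_eval_ne hf x)
  refine ⟨ε, hε, fun t ht => ?_⟩
  have habs : |t - x| < ε := by
    rw [abs_of_neg (by linarith [ht.2])]; linarith [ht.1]
  rw [eval_eq f x t]
  rcases Nat.even_or_odd (f.rootMultiplicity x) with he | ho
  · rw [sign_mul_pos (he.pow_pos (by intro h0; nlinarith [ht.2] : t - x ≠ 0)),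
      hsign t habs, sgnL, he.neg_one_pow, one_mul]
    rfl
  · rw [sign_mul_neg (ho.pow_neg (by linarith [ht.2] : t - x < 0)),
      hsign t habs, sgnL, ho.neg_one_pow, neg_one_mul]
    rfl

lemma sign_const {f : ℝ[X]} {a b : ℝ} (hroot : ∀ x ∈ Ioo a b, f.eval x ≠ 0)
    {s t : ℝ} (hs : s ∈ Ioo a b) (ht : t ∈ Ioo a b) :
    Real.sign (f.eval s) = Real.sign (f.eval t) := by
  wlog hst : s ≤ t generalizing s t
  · exact (this ht hs (le_of_not_ge hst)).symm
  have hfs := hroot s hs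
  have hft := hroot t ht
  rcases hfs.lt_or_gt with h1 | h1 <;> rcases hft.lt_or_gt with h2 | h2
  · rw [Real.sign_of_neg h1, Real.sign_of_neg h2]
  · obtain ⟨c, hc, hc0⟩ := intermediate_value_Icc hst
      ((Polynomial.continuous f).continuousOn) (⟨h1.le, h2.le⟩ : (0 : ℝ) ∈ Icc _ _)
    exact absurd hc0 (hroot c ⟨lt_of_lt_of_le hs.1 hc.1, lt_of_le_of_lt hc.2 ht.2⟩)
  · obtain ⟨c, hc, hc0⟩ := intermediate_value_Icc' hst
      ((Polynomial.continuous f).continuousOn) (⟨h2.le, h1.le⟩ : (0 : ℝ) ∈ Icc _ _)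
    exact absurd hc0 (hroot c ⟨lt_of_lt_of_le hs.1 hc.1, lt_of_le_of_lt hc.2 ht.2⟩)
  · rw [Real.sign_of_pos h1, Real.sign_of_pos h2]

lemma no_root_case {f : ℝ[X]} (hf : f ≠ 0) {a b : ℝ} (hab : a < b)
    (hroot : ∀ x ∈ Ioo a b, f.eval x ≠ 0) : sgnR f a = sgnL f b := by
  obtain ⟨ε₁, hε₁, h₁⟩ := exists_right hf a
  obtain ⟨ε₂, hε₂, h₂⟩ := exists_left hf b
  have hm1 : 0 < min ε₁ (b - a) := lt_min hε₁ (by linarith)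
  have hm2 : 0 < min ε₂ (b - a) := lt_min hε₂ (by linarith)
  have h1a := min_le_left ε₁ (b - a)
  have h1b := min_le_right ε₁ (b - a)
  have h2a := min_le_left ε₂ (b - a)
  have h2b := min_le_right ε₂ (b - a)
  set t₁ := a + min ε₁ (b - a) / 2 with ht₁def
  set t₂ := b - min ε₂ (b - a) / 2 with ht₂def
  have ht₁ : t₁ ∈ Ioo a b := ⟨by simp only [ht₁def]; linarith, by simp only [ht₁def]; linarith⟩
  have ht₂ : t₂ ∈ Ioo a b := ⟨by simp only [ht₂def]; linarith, by simp only [ht₂def]; linarith⟩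
  have e1 : Real.sign (f.eval t₁) = sgnR f a :=
    h₁ t₁ ⟨by simp only [ht₁def]; linarith, by simp only [ht₁def]; linarith⟩
  have e2 : Real.sign (f.eval t₂) = sgnL f b :=
    h₂ t₂ ⟨by simp only [ht₂def]; linarith, by simp only [ht₂def]; linarith⟩
  rw [← e1, ← e2]
  exact sign_const hroot ht₁ ht₂

/-- roots of `f` inside the open interval `(a,b)`, as a finset. -/
noncomputable def rootsIn (f : ℝ[X]) (a b : ℝ) : Finset ℝ :=
  f.roots.toFinset.filter (fun x => x ∈ Ioo a b)

lemma mem_rootsIn {f : ℝ[X]} (hf : f ≠ 0) {a b x : ℝ} :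
    x ∈ rootsIn f a b ↔ f.eval x = 0 ∧ a < x ∧ x < b := by
  simp [rootsIn, Polynomial.mem_roots', hf, Polynomial.IsRoot, and_comm]

lemma telescope : ∀ (n : ℕ) (f : ℝ[X]), f ≠ 0 → ∀ a b : ℝ, a < b →
    (rootsIn f a b).card = n →
    sgnR f a + ∑ x ∈ rootsIn f a b, (sgnR f x - sgnL f x) = sgnL f b := by
  intro n
  induction n with
  | zero =>
    intro f hf a b hab hcard
    have hT : rootsIn f a b = ∅ := Finset.card_eq_zero.1 hcard
    rw [hT, Finset.sum_empty, add_zero]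
    refine no_root_case hf hab fun x hx h0 => ?_
    have : x ∈ rootsIn f a b := (mem_rootsIn hf).2 ⟨h0, hx.1, hx.2⟩
    simp [hT] at this
  | succ n ih =>
    intro f hf a b hab hcard
    have hne : (rootsIn f a b).Nonempty := Finset.card_pos.1 (by omega)
    set r := (rootsIn f a b).max' hne with hrdef
    have hrmem : r ∈ rootsIn f a b := (rootsIn f a b).max'_mem hne
    have hr := (mem_rootsIn hf).1 hrmem
    have har : a < r := hr.2.1
    have hrb : r < b := hr.2.2
    have hsub : rootsIn f a r = (rootsIn f a b).erase r := by
      ext x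
      rw [Finset.mem_erase, mem_rootsIn hf, mem_rootsIn hf]
      constructor
      · rintro ⟨h0, hax, hxr⟩
        exact ⟨ne_of_lt hxr, h0, hax, hxr.trans hrb⟩
      · rintro ⟨hne', h0, hax, hxb⟩
        exact ⟨h0, hax, lt_of_le_of_ne
          (Finset.le_max' _ x ((mem_rootsIn hf).2 ⟨h0, hax, hxb⟩)) hne'⟩
    have hih := ih f hf a r har (by rw [hsub, Finset.card_erase_of_mem hrmem, hcard]; omega)
    have hnr : ∀ x ∈ Ioo r b, f.eval x ≠ 0 := by
      intro x hx h0
      have hxm : x ∈ rootsIn f a b := (mem_rootsIn hf).2 ⟨h0, har.trans hx.1, hx.2⟩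
      exact absurd (Finset.le_max' _ x hxm) (not_le.2 hx.1)
    have hB := no_root_case hf hrb hnr
    have hsum : ∑ x ∈ rootsIn f a b, (sgnR f x - sgnL f x)
        = (sgnR f r - sgnL f r) + ∑ x ∈ rootsIn f a r, (sgnR f x - sgnL f x) := by
      rw [hsub, ← Finset.add_sum_erase _ _ hrmem]
    rw [hsum]
    linarith

lemma pPart_mul {P Q : ℝ[X]} (hP : P ≠ 0) (hQ : Q ≠ 0) (x : ℝ) :
    pPart (P * Q) x = pPart P x * pPart Q x := by
  have hPQ : P * Q ≠ 0 := mul_ne_zero hP hQ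
  have key : (X - C x) ^ ((P * Q).rootMultiplicity x) * (pPart P x * pPart Q x) = P * Q := by
    rw [rootMultiplicity_mul hPQ, pow_add]
    conv_rhs => rw [← pPart_spec P x, ← pPart_spec Q x]
    ring
  have h2 := mul_divByMonic_cancel_left (pPart P x * pPart Q x)
    ((monic_X_sub_C x).pow ((P * Q).rootMultiplicity x))
  rw [key] at h2
  exact h2

lemma neg_one_zpow_eq (m n : ℕ) : ((-1 : ℝ)) ^ ((m : ℤ) - (n : ℤ)) = (-1 : ℝ) ^ (m + n) := by
  rw [zpow_sub₀ (by norm_num : (-1 : ℝ) ≠ 0), zpow_natCast, zpow_natCast, pow_add]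
  rcases Nat.even_or_odd n with hn | hn <;> rw [hn.neg_one_pow] <;> ring

lemma sgnR_mul {P Q : ℝ[X]} (hP : P ≠ 0) (hQ : Q ≠ 0) (x : ℝ) :
    sgnR (P * Q) x = Real.sign ((pPart P x).eval x * (pPart Q x).eval x) := by
  rw [sgnR, pPart_mul hP hQ, eval_mul]

lemma sgnL_mul {P Q : ℝ[X]} (hP : P ≠ 0) (hQ : Q ≠ 0) (x : ℝ) :
    sgnL (P * Q) x = (-1 : ℝ) ^ (pval P Q x) *
      Real.sign ((pPart P x).eval x * (pPart Q x).eval x) := by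
  rw [sgnL, sgnR_mul hP hQ, rootMultiplicity_mul (mul_ne_zero hP hQ), pval, neg_one_zpow_eq]

lemma pval_swap (P Q : ℝ[X]) (x : ℝ) : pval Q P x = -pval P Q x := by
  rw [pval, pval]; ring

lemma indPlus_add {P Q : ℝ[X]} (hP : P ≠ 0) (hQ : Q ≠ 0) (x : ℝ) :
    IndPlus P Q x + IndPlus Q P x = (1/2) * sgnR (P * Q) x - (1/2) * SignAt P Q x := by
  rw [sgnR_mul hP hQ]
  rcases lt_trichotomy (pval P Q x) 0 with hv | hv | hv
  · rw [IndPlus, if_pos ⟨hP, hQ, hv⟩, IndPlus,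
      if_neg (by rw [pval_swap]; rintro ⟨-, -, h⟩; omega), SignAt,
      if_neg (by rintro ⟨-, -, h⟩; omega)]
    ring
  · rw [IndPlus, if_neg (by rintro ⟨-, -, h⟩; omega), IndPlus,
      if_neg (by rw [pval_swap]; rintro ⟨-, -, h⟩; omega), SignAt, if_pos ⟨hP, hQ, hv⟩]
    ring
  · rw [IndPlus, if_neg (by rintro ⟨-, -, h⟩; omega), IndPlus,
      if_pos ⟨hQ, hP, by rw [pval_swap]; omega⟩, SignAt,
      if_neg (by rintro ⟨-, -, h⟩; omega), mul_comm ((pPart Q x).eval x)]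
    ring

lemma indMinus_add {P Q : ℝ[X]} (hP : P ≠ 0) (hQ : Q ≠ 0) (x : ℝ) :
    IndMinus P Q x + IndMinus Q P x = (1/2) * sgnL (P * Q) x - (1/2) * SignAt P Q x := by
  rw [sgnL_mul hP hQ]
  rcases lt_trichotomy (pval P Q x) 0 with hv | hv | hv
  · rw [IndMinus, if_pos ⟨hP, hQ, hv⟩, IndMinus,
      if_neg (by rw [pval_swap]; rintro ⟨-, -, h⟩; omega), SignAt,
      if_neg (by rintro ⟨-, -, h⟩; omega)]
    ring
  · rw [IndMinus, if_neg (by rintro ⟨-, -, h⟩; omega), IndMinus,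
      if_neg (by rw [pval_swap]; rintro ⟨-, -, h⟩; omega), SignAt, if_pos ⟨hP, hQ, hv⟩, hv]
    norm_num
  · rw [IndMinus, if_neg (by rintro ⟨-, -, h⟩; omega), IndMinus,
      if_pos ⟨hQ, hP, by rw [pval_swap]; omega⟩, SignAt,
      if_neg (by rintro ⟨-, -, h⟩; omega), mul_comm ((pPart Q x).eval x), pval_swap]
    rw [zpow_neg]
    have : ((-1 : ℝ) ^ (pval P Q x))⁻¹ = (-1 : ℝ) ^ (pval P Q x) := by
      rcases Int.even_or_odd (pval P Q x) with h | h
      · rw [h.neg_one_zpow]; norm_num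
      · rw [h.neg_one_zpow]; norm_num
    rw [this]
    ring

lemma indAt_add {P Q : ℝ[X]} (hP : P ≠ 0) (hQ : Q ≠ 0) (x : ℝ) :
    IndAt P Q x + IndAt Q P x = (1/2) * sgnR (P * Q) x - (1/2) * sgnL (P * Q) x := by
  have h1 := indPlus_add hP hQ x
  have h2 := indMinus_add hP hQ x
  rw [IndAt, IndAt]
  linarith

lemma indAt_support {P Q : ℝ[X]} (x : ℝ) (h : IndAt P Q x ≠ 0) : (P * Q).eval x = 0 := by
  by_contra h0
  rw [eval_mul] at h0
  obtain ⟨hp0, hq0⟩ := mul_ne_zero_iff.mp h0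
  have hm : pval P Q x = 0 := by
    rw [pval, rootMultiplicity_eq_zero hp0, rootMultiplicity_eq_zero hq0]
    ring
  apply h
  rw [IndAt, IndPlus, if_neg (by rintro ⟨-, -, hlt⟩; omega), IndMinus,
    if_neg (by rintro ⟨-, -, hlt⟩; omega), sub_self]

lemma finsum_Ioo_eq_sum {f : ℝ[X]} (hf : f ≠ 0) (g : ℝ → ℝ)
    (hg : ∀ x, g x ≠ 0 → f.eval x = 0) (a b : ℝ) :
    ∑ᶠ x ∈ Ioo a b, g x = ∑ x ∈ rootsIn f a b, g x := by
  apply finsum_mem_eq_sum_of_inter_support_eq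
  ext x
  simp only [Set.mem_inter_iff, Function.mem_support, Finset.coe_sort_coe, Finset.mem_coe,
    Set.mem_Ioo]
  constructor
  · rintro ⟨hx, hgx⟩
    exact ⟨(mem_rootsIn hf).2 ⟨hg x hgx, hx.1, hx.2⟩, hgx⟩
  · rintro ⟨hx, hgx⟩
    obtain ⟨-, h1, h2⟩ := (mem_rootsIn hf).1 hx
    exact ⟨⟨h1, h2⟩, hgx⟩

lemma IndPlus_zero_left (Q : ℝ[X]) (x : ℝ) : IndPlus 0 Q x = 0 :=
  if_neg (fun h => h.1 rfl)

lemma IndPlus_zero_right (P : ℝ[X]) (x : ℝ) : IndPlus P 0 x = 0 :=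
  if_neg (fun h => h.2.1 rfl)

lemma IndMinus_zero_left (Q : ℝ[X]) (x : ℝ) : IndMinus 0 Q x = 0 :=
  if_neg (fun h => h.1 rfl)

lemma IndMinus_zero_right (P : ℝ[X]) (x : ℝ) : IndMinus P 0 x = 0 :=
  if_neg (fun h => h.2.1 rfl)

lemma SignAt_zero_left (Q : ℝ[X]) (x : ℝ) : SignAt 0 Q x = 0 :=
  if_neg (fun h => h.1 rfl)

lemma SignAt_zero_right (P : ℝ[X]) (x : ℝ) : SignAt P 0 x = 0 :=
  if_neg (fun h => h.2.1 rfl)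

lemma main (P Q : ℝ[X]) {a b : ℝ} (hab : a < b) :
    IndSeg P Q a b + IndSeg Q P a b = Var P Q a b := by
  by_cases hP : P = 0
  · subst hP
    simp [IndSeg, Var, IndAt, IndPlus_zero_left, IndPlus_zero_right, IndMinus_zero_left,
      IndMinus_zero_right, SignAt_zero_left]
  by_cases hQ : Q = 0
  · subst hQ
    simp [IndSeg, Var, IndAt, IndPlus_zero_left, IndPlus_zero_right, IndMinus_zero_left,
      IndMinus_zero_right, SignAt_zero_right]
  have hf : P * Q ≠ 0 := mul_ne_zero hP hQ
  have h1 : ∑ᶠ x ∈ Ioo a b, IndAt P Q x = ∑ x ∈ rootsIn (P * Q) a b, IndAt P Q x :=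
    finsum_Ioo_eq_sum hf _ (fun x hx => indAt_support x hx) a b
  have h2 : ∑ᶠ x ∈ Ioo a b, IndAt Q P x = ∑ x ∈ rootsIn (P * Q) a b, IndAt Q P x :=
    finsum_Ioo_eq_sum hf _ (fun x hx => by
      have := indAt_support x hx
      rwa [mul_comm] at this) a b
  have htel := telescope (rootsIn (P * Q) a b).card (P * Q) hf a b hab rfl
  have hsum : ∑ x ∈ rootsIn (P * Q) a b, IndAt P Q x
      + ∑ x ∈ rootsIn (P * Q) a b, IndAt Q P x
      = (1/2) * (sgnL (P * Q) b - sgnR (P * Q) a) := by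
    rw [← Finset.sum_add_distrib]
    have : ∑ x ∈ rootsIn (P * Q) a b, (IndAt P Q x + IndAt Q P x)
        = ∑ x ∈ rootsIn (P * Q) a b, ((1/2) * (sgnR (P * Q) x - sgnL (P * Q) x)) := by
      refine Finset.sum_congr rfl fun x _ => ?_
      rw [indAt_add hP hQ x]; ring
    rw [this, ← Finset.mul_sum]
    have h3 : ∑ x ∈ rootsIn (P * Q) a b, (sgnR (P * Q) x - sgnL (P * Q) x)
        = sgnL (P * Q) b - sgnR (P * Q) a := by linarith
    rw [h3]
  have e1 := indPlus_add hP hQ a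
  have e2 := indMinus_add hP hQ b
  rw [IndSeg, IndSeg, h1, h2, Var]
  linarith

end Stmt5Aux

theorem stmt5 (P Q : ℝ[X]) (a b : ℝ) :
    Ind P Q a b + Ind Q P a b = Var P Q a b := by
  rcases lt_trichotomy a b with hab | rfl | hab
  · rw [Ind, if_pos hab, Ind, if_pos hab]
    exact Stmt5Aux.main P Q hab
  · rw [Ind, if_neg (lt_irrefl a), if_neg (lt_irrefl a), Ind, if_neg (lt_irrefl a),
      if_neg (lt_irrefl a), Var]
    ring
  · rw [Ind, if_neg (not_lt.2 hab.le), if_pos hab, Ind, if_neg (not_lt.2 hab.le), if_pos hab]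
    have h := Stmt5Aux.main P Q hab
    rw [Var] at h ⊢
    linarith
end

section
/- There exist real polynomials P, Q, R, S and a < b for which the product formula Ind_a^b(PR − QS, PS + QR) = Ind_a^b(P,Q) + Ind_a^b(R,S) − Var_a^b(PS + QR, QS) fails. Specifically, for a = 0, b = 1, P = 1, Q = X, R = X − 1, S = X one has Ind_0^1(PR − QS, PS + QR) = −1/2, Ind_0^1(P,Q) = 1/2, Ind_0^1(R,S) = −1/2, and Var_0^1(PS + QR, QS) = 0. -/
open Polynomial

-- auxiliary lemmas

lemma ne_zero_of_eval_ne {P : ℝ[X]} {x : ℝ} (h : P.eval x ≠ 0) : P ≠ 0 := by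
  intro h0; simp [h0] at h

lemma rootMult_of_eval_ne {P : ℝ[X]} {x : ℝ} (h : P.eval x ≠ 0) :
    P.rootMultiplicity x = 0 :=
  rootMultiplicity_eq_zero h

lemma pPart_of_eval_ne {P : ℝ[X]} {x : ℝ} (h : P.eval x ≠ 0) : pPart P x = P := by
  unfold pPart
  rw [rootMult_of_eval_ne h, pow_zero, divByMonic_one]

lemma X_eq_pow : (X : ℝ[X]) = (X - C 0) ^ 1 := by simp

lemma XX_eq_pow : (X * X : ℝ[X]) = (X - C 0) ^ 2 := by rw [map_zero, sub_zero, sq]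

lemma rootMult_X : (X : ℝ[X]).rootMultiplicity 0 = 1 := by
  rw [X_eq_pow]; exact rootMultiplicity_X_sub_C_pow 0 1

lemma rootMult_XX : (X * X : ℝ[X]).rootMultiplicity 0 = 2 := by
  rw [XX_eq_pow]; exact rootMultiplicity_X_sub_C_pow 0 2

lemma pPart_X : pPart (X : ℝ[X]) 0 = 1 := by
  unfold pPart
  rw [rootMult_X]
  nth_rewrite 1 [X_eq_pow]
  have := mul_divByMonic_cancel_left (1 : ℝ[X]) ((monic_X_sub_C (0:ℝ)).pow 1)
  rwa [mul_one] at this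

lemma pPart_XX : pPart (X * X : ℝ[X]) 0 = 1 := by
  unfold pPart
  rw [rootMult_XX]
  nth_rewrite 1 [XX_eq_pow]
  have := mul_divByMonic_cancel_left (1 : ℝ[X]) ((monic_X_sub_C (0:ℝ)).pow 2)
  rwa [mul_one] at this

lemma indAt_of_eval_ne {P Q : ℝ[X]} {x : ℝ} (h : Q.eval x ≠ 0) : IndAt P Q x = 0 := by
  have hv : ¬ pval P Q x < 0 := by
    unfold pval; rw [rootMult_of_eval_ne h]; omega
  simp [IndAt, IndPlus, IndMinus, hv]

lemma indMinus_of_eval_ne {P Q : ℝ[X]} {x : ℝ} (h : Q.eval x ≠ 0) : IndMinus P Q x = 0 := by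
  have hv : ¬ pval P Q x < 0 := by
    unfold pval; rw [rootMult_of_eval_ne h]; omega
  simp [IndMinus, hv]

lemma finsum_Ioo_zero {P Q : ℝ[X]} (h : ∀ x ∈ Set.Ioo (0:ℝ) 1, Q.eval x ≠ 0) :
    (∑ᶠ x ∈ Set.Ioo (0:ℝ) 1, IndAt P Q x) = 0 :=
  finsum_mem_of_eqOn_zero fun x hx => indAt_of_eval_ne (h x hx)

lemma X_ne : (X : ℝ[X]) ≠ 0 := X_ne_zero

lemma XX_eval_ne {x : ℝ} (hx : x ∈ Set.Ioo (0:ℝ) 1) : (X * X : ℝ[X]).eval x ≠ 0 := by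
  have := hx.1; simp; positivity

lemma XX_eval_one : (X * X : ℝ[X]).eval 1 ≠ 0 := by norm_num

lemma Ind1 : Ind ((1 : ℝ[X]) * (X - 1) - X * X) ((1 : ℝ[X]) * X + X * (X - 1)) 0 1 = -(1/2) := by
  have eQ : ((1 : ℝ[X]) * X + X * (X - 1)) = X * X := by ring
  rw [eQ]
  set P : ℝ[X] := (1 : ℝ[X]) * (X - 1) - X * X with hP
  have hP0 : P.eval 0 = -1 := by simp [hP]
  have hPne : P ≠ 0 := ne_zero_of_eval_ne (by rw [hP0]; norm_num)
  have hQne : (X * X : ℝ[X]) ≠ 0 := ne_zero_of_eval_ne XX_eval_one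
  have hval : pval P (X * X) 0 = -2 := by
    unfold pval
    rw [rootMult_of_eval_ne (by rw [hP0]; norm_num), rootMult_XX]; ring
  have hplus : IndPlus P (X * X) 0 = -(1/2) := by
    rw [IndPlus, if_pos ⟨hPne, hQne, by rw [hval]; norm_num⟩,
      pPart_of_eval_ne (by rw [hP0]; norm_num), pPart_XX, hP0]
    norm_num [Real.sign_of_neg]
  rw [Ind, if_pos one_pos, IndSeg, hplus, finsum_Ioo_zero fun x hx => XX_eval_ne hx,
    indMinus_of_eval_ne XX_eval_one]
  ring

lemma Ind2 : Ind (1 : ℝ[X]) X 0 1 = 1/2 := by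
  have h1 : (1 : ℝ[X]).eval 0 ≠ 0 := by norm_num
  have hX1 : (X : ℝ[X]).eval 1 ≠ 0 := by norm_num
  have hval : pval (1 : ℝ[X]) X 0 = -1 := by
    unfold pval; rw [rootMult_of_eval_ne h1, rootMult_X]; ring
  have hplus : IndPlus (1 : ℝ[X]) X 0 = 1/2 := by
    rw [IndPlus, if_pos ⟨one_ne_zero, X_ne, by rw [hval]; norm_num⟩,
      pPart_of_eval_ne h1, pPart_X]
    norm_num [Real.sign_of_pos]
  rw [Ind, if_pos one_pos, IndSeg, hplus,
    finsum_Ioo_zero (fun x hx => by have := hx.1; simpa using this.ne'),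
    indMinus_of_eval_ne hX1]
  ring

lemma Ind3 : Ind ((X : ℝ[X]) - 1) X 0 1 = -(1/2) := by
  have hP0 : ((X : ℝ[X]) - 1).eval 0 = -1 := by simp
  have hPe : ((X : ℝ[X]) - 1).eval 0 ≠ 0 := by rw [hP0]; norm_num
  have hX1 : (X : ℝ[X]).eval 1 ≠ 0 := by norm_num
  have hval : pval ((X : ℝ[X]) - 1) X 0 = -1 := by
    unfold pval; rw [rootMult_of_eval_ne hPe, rootMult_X]; ring
  have hplus : IndPlus ((X : ℝ[X]) - 1) X 0 = -(1/2) := by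
    rw [IndPlus, if_pos ⟨ne_zero_of_eval_ne hPe, X_ne, by rw [hval]; norm_num⟩,
      pPart_of_eval_ne hPe, pPart_X, hP0]
    norm_num [Real.sign_of_neg]
  rw [Ind, if_pos one_pos, IndSeg, hplus,
    finsum_Ioo_zero (fun x hx => by have := hx.1; simpa using this.ne'),
    indMinus_of_eval_ne hX1]
  ring

lemma Var1 : Var ((1 : ℝ[X]) * X + X * (X - 1)) (X * X) 0 1 = 0 := by
  have eQ : ((1 : ℝ[X]) * X + X * (X - 1)) = X * X := by ring
  rw [eQ]
  have hQne : (X * X : ℝ[X]) ≠ 0 := ne_zero_of_eval_ne XX_eval_one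
  have hval0 : pval (X * X : ℝ[X]) (X * X) 0 = 0 := by unfold pval; ring
  have hval1 : pval (X * X : ℝ[X]) (X * X) 1 = 0 := by unfold pval; ring
  have hs0 : SignAt (X * X : ℝ[X]) (X * X) 0 = 1 := by
    rw [SignAt, if_pos ⟨hQne, hQne, hval0⟩, pPart_XX]
    norm_num [Real.sign_of_pos]
  have hs1 : SignAt (X * X : ℝ[X]) (X * X) 1 = 1 := by
    rw [SignAt, if_pos ⟨hQne, hQne, hval1⟩, pPart_of_eval_ne XX_eval_one]
    norm_num [Real.sign_of_pos]
  rw [Var, hs0, hs1]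
  ring

theorem stmt7 :
    (∃ (P Q R S : ℝ[X]) (a b : ℝ), a < b ∧
      Ind (P * R - Q * S) (P * S + Q * R) a b ≠
        Ind P Q a b + Ind R S a b - Var (P * S + Q * R) (Q * S) a b) ∧
    Ind ((1 : ℝ[X]) * (X - 1) - X * X) ((1 : ℝ[X]) * X + X * (X - 1)) 0 1 = -(1/2) ∧
    Ind (1 : ℝ[X]) X 0 1 = 1/2 ∧
    Ind ((X : ℝ[X]) - 1) X 0 1 = -(1/2) ∧
    Var ((1 : ℝ[X]) * X + X * (X - 1)) (X * X) 0 1 = 0 := by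
  refine ⟨⟨1, X, X - 1, X, 0, 1, one_pos, ?_⟩, Ind1, Ind2, Ind3, Var1⟩
  rw [Ind1, Ind2, Ind3, Var1]
  norm_num
end

section
/- (Bad number cancellation) Let P, Q, R, S be real polynomials with P,Q coprime and R,S coprime, and let c ∈ ℝ with Q(c) = S(c) = 0, mult_c(Q) = mult_c(S) = μ > 0, and mult_c(PS + QR) = 2μ (so c is a 'bad number'). Write Q = (X−c)^μ Q_c, S = (X−c)^μ S_c. Then sign(P(c)·Q_c(c)) + sign(R(c)·S_c(c)) = 0. -/
open Polynomial

theorem stmt11 (P Q R S : ℝ[X]) (hPQ : IsCoprime P Q) (hRS : IsCoprime R S)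
    (c : ℝ) (μ : ℕ) (hμ : 0 < μ) (hQ : Q ≠ 0) (hS : S ≠ 0)
    (hQm : Q.rootMultiplicity c = μ) (hSm : S.rootMultiplicity c = μ)
    (hT : P * S + Q * R ≠ 0) (hTm : (P * S + Q * R).rootMultiplicity c = 2 * μ) :
    Real.sign (P.eval c * (pPart Q c).eval c) +
      Real.sign (R.eval c * (pPart S c).eval c) = 0 := by
  set Qc := pPart Q c with hQcdef
  set Sc := pPart S c with hScdef
  have hQfac : (X - C c) ^ μ * Qc = Q := by
    rw [hQcdef, pPart, ← hQm]; exact pow_mul_divByMonic_rootMultiplicity_eq Q c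
  have hSfac : (X - C c) ^ μ * Sc = S := by
    rw [hScdef, pPart, ← hSm]; exact pow_mul_divByMonic_rootMultiplicity_eq S c
  have hQc0 : Qc.eval c ≠ 0 := by
    rw [hQcdef, pPart]; exact eval_divByMonic_pow_rootMultiplicity_ne_zero c hQ
  have hSc0 : Sc.eval c ≠ 0 := by
    rw [hScdef, pPart]; exact eval_divByMonic_pow_rootMultiplicity_ne_zero c hS
  have hQroot : Q.eval c = 0 := by
    have : 0 < Q.rootMultiplicity c := hQm ▸ hμ
    exact ((rootMultiplicity_pos hQ).mp this)
  have hSroot : S.eval c = 0 := by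
    have : 0 < S.rootMultiplicity c := hSm ▸ hμ
    exact ((rootMultiplicity_pos hS).mp this)
  have hP0 : P.eval c ≠ 0 := by
    obtain ⟨u, v, huv⟩ := hPQ
    intro h
    have := congrArg (Polynomial.eval c) huv
    simp [h, hQroot] at this
  have hR0 : R.eval c ≠ 0 := by
    obtain ⟨u, v, huv⟩ := hRS
    intro h
    have := congrArg (Polynomial.eval c) huv
    simp [h, hSroot] at this
  -- key factorization
  have hfac : P * S + Q * R = (X - C c) ^ μ * (P * Sc + Qc * R) := by
    rw [← hQfac, ← hSfac]; ring
  have hW : P * Sc + Qc * R ≠ 0 := by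
    intro h; apply hT; rw [hfac, h, mul_zero]
  have hWm : (P * Sc + Qc * R).rootMultiplicity c = μ := by
    have h1 : ((X - C c) ^ μ * (P * Sc + Qc * R)).rootMultiplicity c = 2 * μ := by
      rw [← hfac]; exact hTm
    rw [rootMultiplicity_mul (by rw [← hfac]; exact hT), rootMultiplicity_X_sub_C_pow] at h1
    omega
  have hWroot : P.eval c * Sc.eval c + Qc.eval c * R.eval c = 0 := by
    have : 0 < (P * Sc + Qc * R).rootMultiplicity c := hWm ▸ hμ
    have := (rootMultiplicity_pos hW).mp this
    simpa using this
  -- now the sign argument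
  set p := P.eval c * Qc.eval c with hp
  set r := R.eval c * Sc.eval c with hr
  have hpne : p ≠ 0 := mul_ne_zero hP0 hQc0
  have hrne : r ≠ 0 := mul_ne_zero hR0 hSc0
  have hprneg : p * r < 0 := by
    have hPS : P.eval c * Sc.eval c = -(Qc.eval c * R.eval c) := by linarith
    have heq : p * r = -(Qc.eval c * R.eval c)^2 := by
      have : p * r = (P.eval c * Sc.eval c) * (Qc.eval c * R.eval c) := by
        rw [hp, hr]; ring
      rw [this, hPS]; ring
    have hne : Qc.eval c * R.eval c ≠ 0 := mul_ne_zero hQc0 hR0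
    have : 0 < (Qc.eval c * R.eval c)^2 := by positivity
    linarith [heq]
  rcases lt_or_gt_of_ne hpne with hplt | hpgt
  · have hrgt : 0 < r := by nlinarith
    rw [Real.sign_of_neg hplt, Real.sign_of_pos hrgt]; ring
  · have hrlt : r < 0 := by nlinarith
    rw [Real.sign_of_pos hpgt, Real.sign_of_neg hrlt]; ring
end

section
/- If c is a bad number for real polynomials P,Q,R,S (P,Q coprime, R,S coprime), then Ind_c(PR − QS, PS + QR) = 0, and Ind_c(P,Q) + Ind_c(R,S) = 0. -/
open Polynomial

theorem stmt12 (P Q R S : ℝ[X]) (hPQ : IsCoprime P Q) (hRS : IsCoprime R S)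
    (c : ℝ) (hbad : BadNumber P Q R S c) :
    IndAt (P * R - Q * S) (P * S + Q * R) c = 0 ∧
    IndAt P Q c + IndAt R S c = 0 := by
  obtain ⟨hP, hQ, hR, hS, hPSQR, heq, hlt, hzero⟩ := hbad
  have hlt' := heq ▸ hlt
  unfold pval at hlt hlt' heq hzero
  -- multiplicities
  have hQpos : 0 < Q.rootMultiplicity c := by omega
  have hSpos : 0 < S.rootMultiplicity c := by omega
  have hQc : Q.eval c = 0 := (rootMultiplicity_pos hQ).mp hQpos
  have hSc : S.eval c = 0 := (rootMultiplicity_pos hS).mp hSpos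
  have hPc : P.eval c ≠ 0 := by
    obtain ⟨u, v, huv⟩ := hPQ
    intro h
    have := congrArg (eval c) huv
    simp [h, hQc] at this
  have hRc : R.eval c ≠ 0 := by
    obtain ⟨u, v, huv⟩ := hRS
    intro h
    have := congrArg (eval c) huv
    simp [h, hSc] at this
  have hmP : P.rootMultiplicity c = 0 := rootMultiplicity_eq_zero hPc
  have hmR : R.rootMultiplicity c = 0 := rootMultiplicity_eq_zero hRc
  set μ := Q.rootMultiplicity c with hμ
  have hmS : S.rootMultiplicity c = μ := by omega
  -- pParts
  have hPpart : pPart P c = P := by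
    simp [pPart, hmP, Polynomial.divByMonic_one]
  have hRpart : pPart R c = R := by
    simp [pPart, hmR, Polynomial.divByMonic_one]
  set Q₁ := pPart Q c with hQ₁def
  set S₁ := pPart S c with hS₁def
  have hQfac : (X - C c) ^ μ * Q₁ = Q := pow_mul_divByMonic_rootMultiplicity_eq Q c
  have hSfac : (X - C c) ^ μ * S₁ = S := by
    rw [hS₁def]; unfold pPart; rw [← hmS]
    exact pow_mul_divByMonic_rootMultiplicity_eq S c
  have hQ1c : Q₁.eval c ≠ 0 := eval_divByMonic_pow_rootMultiplicity_ne_zero c hQ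
  have hS1c : S₁.eval c ≠ 0 := by
    rw [hS₁def]; unfold pPart
    exact eval_divByMonic_pow_rootMultiplicity_ne_zero c hS
  -- key factorization of P*S + Q*R
  have hkey : (X - C c) ^ μ * (P * S₁ + Q₁ * R) = P * S + Q * R := by
    rw [← hQfac, ← hSfac]; ring
  have hTne : P * S₁ + Q₁ * R ≠ 0 := by
    intro h
    rw [← hkey, h, mul_zero] at hPSQR
    exact hPSQR rfl
  -- multiplicity of P*S+Q*R equals 2μ
  have hmQS : (Q * S).rootMultiplicity c = 2 * μ := by
    rw [rootMultiplicity_mul (mul_ne_zero hQ hS), hmS]; omega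
  have hmSum : (P * S + Q * R).rootMultiplicity c = 2 * μ := by omega
  have hmT : (P * S₁ + Q₁ * R).rootMultiplicity c = μ := by
    have h1 : (P * S + Q * R).rootMultiplicity c
        = μ + (P * S₁ + Q₁ * R).rootMultiplicity c := by
      rw [← hkey, rootMultiplicity_mul (hkey ▸ hPSQR),
        rootMultiplicity_X_sub_C_pow]
    omega
  have hTc : P.eval c * S₁.eval c + Q₁.eval c * R.eval c = 0 := by
    have : 0 < (P * S₁ + Q₁ * R).rootMultiplicity c := by omega
    have := (rootMultiplicity_pos hTne).mp this
    simpa [IsRoot] using this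
  -- sign relation
  have hprod : (P.eval c * Q₁.eval c) * (R.eval c * S₁.eval c) < 0 := by
    have h0 : Q₁.eval c * R.eval c ≠ 0 := mul_ne_zero hQ1c hRc
    have he : (P.eval c * Q₁.eval c) * (R.eval c * S₁.eval c)
        = -((Q₁.eval c * R.eval c) * (Q₁.eval c * R.eval c)) := by
      linear_combination (Q₁.eval c * R.eval c) * hTc
    rw [he]
    exact neg_lt_zero.mpr (mul_self_pos.mpr h0)
  have hsign : Real.sign (R.eval c * S₁.eval c) = - Real.sign (P.eval c * Q₁.eval c) := by
    rcases lt_or_gt_of_ne (left_ne_zero_of_mul hprod.ne) with h | h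
    · have hb : 0 < R.eval c * S₁.eval c := by nlinarith
      simp [Real.sign_of_pos hb, Real.sign_of_neg h]
    · have hb : R.eval c * S₁.eval c < 0 := by nlinarith
      simp [Real.sign_of_neg hb, Real.sign_of_pos h]
  constructor
  · -- first part
    have hD : (P * R - Q * S).eval c ≠ 0 := by
      simp [hQc, hPc, hRc]
    have hDne : P * R - Q * S ≠ 0 := fun h => hD (by simp [h])
    have hmD : (P * R - Q * S).rootMultiplicity c = 0 := rootMultiplicity_eq_zero hD
    have hpv : pval (P * R - Q * S) (P * S + Q * R) c = -(2 * μ) := by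
      unfold pval; rw [hmD, hmSum]; push_cast; ring
    have hpow : (-1 : ℝ) ^ (pval (P * R - Q * S) (P * S + Q * R) c) = 1 := by
      rw [hpv, zpow_neg, zpow_mul]
      norm_num
    unfold IndAt IndPlus IndMinus
    split
    · rw [hpow]; ring
    · ring
  · -- second part
    unfold IndAt IndPlus IndMinus
    have hc1 : P ≠ 0 ∧ Q ≠ 0 ∧ pval P Q c < 0 := ⟨hP, hQ, hlt⟩
    have hc2 : R ≠ 0 ∧ S ≠ 0 ∧ pval R S c < 0 := ⟨hR, hS, hlt'⟩
    rw [if_pos hc1, if_pos hc2, if_pos hc1, if_pos hc2]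
    have hpveq : pval R S c = pval P Q c := heq.symm
    rw [hPpart, hRpart, ← hQ₁def, ← hS₁def, hsign, hpveq]
    ring
end

section
/- (Auxiliary product formula) Let P, Q, R, S be real polynomials with P,Q not both zero and R,S not both zero, and a < b real numbers. Assume neither a nor b is a bad number for P,Q,R,S. Then Ind_a^b(PR − QS, PS + QR) = Ind_a^b(P,Q) + Ind_a^b(R,S) − Var_a^b(PS + QR, QS). -/
open Polynomial

/-! ## Auxiliary development -/

/-! ### Real.sign helpers -/

lemma rsign_mul (x y : ℝ) : Real.sign (x * y) = Real.sign x * Real.sign y := by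
  rcases lt_trichotomy x 0 with hx|hx|hx <;> rcases lt_trichotomy y 0 with hy|hy|hy
  · rw [Real.sign_of_pos (mul_pos_of_neg_of_neg hx hy), Real.sign_of_neg hx,
      Real.sign_of_neg hy]; ring
  · simp [hy]
  · rw [Real.sign_of_neg (mul_neg_of_neg_of_pos hx hy), Real.sign_of_neg hx,
      Real.sign_of_pos hy]; ring
  · simp [hx]
  · simp [hx]
  · simp [hx]
  · rw [Real.sign_of_neg (mul_neg_of_pos_of_neg hx hy), Real.sign_of_pos hx,
      Real.sign_of_neg hy]; ring
  · simp [hy]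
  · rw [Real.sign_of_pos (mul_pos hx hy), Real.sign_of_pos hx, Real.sign_of_pos hy]; ring

lemma rsign_neg' (x : ℝ) : Real.sign (-x) = - Real.sign x := Real.sign_neg

lemma rsign_ne_zero {x : ℝ} (h : x ≠ 0) : Real.sign x = 1 ∨ Real.sign x = -1 :=
  (Real.sign_apply_eq_of_ne_zero x h).symm.imp id id |>.symm.imp id id |>.imp (fun h => h) id |>.symm

/-! ### pPart basics -/

lemma pPart_zero (c : ℝ) : pPart 0 c = 0 := by
  simp [pPart]

lemma pPart_spec {F : ℝ[X]} (c : ℝ) :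
    F = (X - C c) ^ F.rootMultiplicity c * pPart F c :=
  (pow_mul_divByMonic_rootMultiplicity_eq F c).symm

lemma pPart_eval_ne_zero {F : ℝ[X]} (hF : F ≠ 0) (c : ℝ) : (pPart F c).eval c ≠ 0 :=
  eval_divByMonic_pow_rootMultiplicity_ne_zero c hF

lemma part_unique {F U : ℝ[X]} {c : ℝ} {k : ℕ} (hU : U.eval c ≠ 0)
    (hF : F = (X - C c) ^ k * U) :
    F.rootMultiplicity c = k ∧ pPart F c = U := by
  have hU0 : U ≠ 0 := fun h => hU (by simp [h])
  have hmult : F.rootMultiplicity c = k := by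
    rw [hF, mul_comm, rootMultiplicity_mul_X_sub_C_pow hU0,
      rootMultiplicity_eq_zero (fun h => hU h), zero_add]
  refine ⟨hmult, ?_⟩
  rw [pPart, hmult, hF, mul_divByMonic_cancel_left _ ((monic_X_sub_C c).pow k)]

/-! ### sR and sL -/

noncomputable def sR (F : ℝ[X]) (c : ℝ) : ℝ := Real.sign ((pPart F c).eval c)

noncomputable def sL (F : ℝ[X]) (c : ℝ) : ℝ := (-1) ^ (F.rootMultiplicity c) * sR F c

lemma sR_zero (c : ℝ) : sR 0 c = 0 := by simp [sR, pPart_zero]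

lemma sL_zero (c : ℝ) : sL 0 c = 0 := by simp [sL, sR_zero]

lemma sR_ne_zero {F : ℝ[X]} (hF : F ≠ 0) (c : ℝ) : sR F c = 1 ∨ sR F c = -1 :=
  rsign_ne_zero (pPart_eval_ne_zero hF c)

lemma sR_sq {F : ℝ[X]} (hF : F ≠ 0) (c : ℝ) : sR F c * sR F c = 1 := by
  rcases sR_ne_zero hF c with h|h <;> rw [h] <;> norm_num

lemma pPart_mul (F G : ℝ[X]) (c : ℝ) : pPart (F * G) c = pPart F c * pPart G c := by
  by_cases hF : F = 0
  · simp [hF, pPart_zero]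
  by_cases hG : G = 0
  · simp [hG, pPart_zero]
  have h : F * G = (X - C c) ^ (F.rootMultiplicity c + G.rootMultiplicity c) *
      (pPart F c * pPart G c) := by
    rw [pow_add]
    conv_lhs => rw [pPart_spec (F := F) c, pPart_spec (F := G) c]
    ring
  have he : (pPart F c * pPart G c).eval c ≠ 0 := by
    rw [eval_mul]; exact mul_ne_zero (pPart_eval_ne_zero hF c) (pPart_eval_ne_zero hG c)
  exact (part_unique he h).2

lemma rootMultiplicity_mul'' {F G : ℝ[X]} (hF : F ≠ 0) (hG : G ≠ 0) (c : ℝ) :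
    (F * G).rootMultiplicity c = F.rootMultiplicity c + G.rootMultiplicity c :=
  rootMultiplicity_mul (mul_ne_zero hF hG)

lemma sR_mul (F G : ℝ[X]) (c : ℝ) : sR (F * G) c = sR F c * sR G c := by
  rw [sR, pPart_mul, eval_mul, rsign_mul]; rfl

lemma pPart_neg (F : ℝ[X]) (c : ℝ) : pPart (-F) c = - pPart F c := by
  by_cases hF : F = 0
  · simp [hF, pPart_zero]
  have h : -F = (X - C c) ^ (F.rootMultiplicity c) * (-pPart F c) := by
    conv_lhs => rw [pPart_spec (F := F) c]; ring_nf
    ring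
  have he : (-pPart F c).eval c ≠ 0 := by
    rw [eval_neg]; exact neg_ne_zero.2 (pPart_eval_ne_zero hF c)
  exact (part_unique he h).2

lemma rootMultiplicity_neg (F : ℝ[X]) (c : ℝ) : (-F).rootMultiplicity c = F.rootMultiplicity c := by
  by_cases hF : F = 0
  · simp [hF]
  exact (part_unique (by rw [eval_neg]; exact neg_ne_zero.2 (pPart_eval_ne_zero hF c))
    (by conv_lhs => rw [pPart_spec (F := F) c]; ring_nf
        ring)).1

lemma sR_neg (F : ℝ[X]) (c : ℝ) : sR (-F) c = - sR F c := by
  rw [sR, pPart_neg, eval_neg, rsign_neg']; rfl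

/-! ### sum analysis -/

lemma sum_dom {F G : ℝ[X]} {c : ℝ} (hF : F ≠ 0) (hG : G ≠ 0)
    (h : F.rootMultiplicity c < G.rootMultiplicity c) :
    F + G ≠ 0 ∧ (F + G).rootMultiplicity c = F.rootMultiplicity c ∧ sR (F + G) c = sR F c := by
  set m := F.rootMultiplicity c
  set n := G.rootMultiplicity c
  have hd : F + G = (X - C c) ^ m * (pPart F c + (X - C c) ^ (n - m) * pPart G c) := by
    conv_lhs => rw [pPart_spec (F := F) c, pPart_spec (F := G) c]
    rw [mul_add, ← mul_assoc, ← pow_add]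
    congr 3
    omega
  have he : (pPart F c + (X - C c) ^ (n - m) * pPart G c).eval c = (pPart F c).eval c := by
    have : n - m ≠ 0 := by omega
    simp [eval_add, eval_mul, eval_pow, zero_pow this]
  have he' : (pPart F c + (X - C c) ^ (n - m) * pPart G c).eval c ≠ 0 := by
    rw [he]; exact pPart_eval_ne_zero hF c
  obtain ⟨h1, h2⟩ := part_unique he' hd
  refine ⟨?_, h1, ?_⟩
  · intro h0
    rw [h0] at hd
    rcases mul_eq_zero.1 hd.symm with h'|h'
    · exact absurd h' (pow_ne_zero _ (X_sub_C_ne_zero c))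
    · exact he' (by simp [h'])
  · rw [sR, h2, he]; rfl

lemma sum_eq_of_ne {F G : ℝ[X]} {c : ℝ} (hF : F ≠ 0) (hG : G ≠ 0)
    (hm : F.rootMultiplicity c = G.rootMultiplicity c)
    (h : (pPart F c).eval c + (pPart G c).eval c ≠ 0) :
    F + G ≠ 0 ∧ (F + G).rootMultiplicity c = F.rootMultiplicity c ∧
      sR (F + G) c = Real.sign ((pPart F c).eval c + (pPart G c).eval c) := by
  have hd : F + G = (X - C c) ^ (F.rootMultiplicity c) * (pPart F c + pPart G c) := by
    conv_lhs => rw [pPart_spec (F := F) c, pPart_spec (F := G) c]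
    rw [hm, mul_add]
  have he' : (pPart F c + pPart G c).eval c ≠ 0 := by rwa [eval_add]
  obtain ⟨h1, h2⟩ := part_unique he' hd
  refine ⟨?_, h1, ?_⟩
  · intro h0
    rw [h0] at hd
    rcases mul_eq_zero.1 hd.symm with h'|h'
    · exact absurd h' (pow_ne_zero _ (X_sub_C_ne_zero c))
    · exact he' (by simp [h'])
  · rw [sR, h2, eval_add]

lemma sum_cancel {F G : ℝ[X]} {c : ℝ} (hF : F ≠ 0) (hG : G ≠ 0)
    (hm : F.rootMultiplicity c = G.rootMultiplicity c)
    (h : F + G = 0 ∨ F.rootMultiplicity c < (F + G).rootMultiplicity c) :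
    (pPart G c).eval c = -(pPart F c).eval c := by
  by_contra hne
  have h' : (pPart F c).eval c + (pPart G c).eval c ≠ 0 := by
    intro h0; exact hne (by linarith)
  obtain ⟨h1, h2, _⟩ := sum_eq_of_ne hF hG hm h'
  rcases h with h|h
  · exact h1 h
  · omega


/-! ### rewrite lemmas -/

lemma pval_def (P Q : ℝ[X]) (c : ℝ) :
    pval P Q c = (P.rootMultiplicity c : ℤ) - (Q.rootMultiplicity c : ℤ) := rfl

lemma IndPlus_pos {P Q : ℝ[X]} {c : ℝ} (hP : P ≠ 0) (hQ : Q ≠ 0) (h : pval P Q c < 0) :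
    IndPlus P Q c = 1/2 * sR (P*Q) c := by
  rw [IndPlus, if_pos ⟨hP, hQ, h⟩, sR_mul, sR, sR, ← rsign_mul]

lemma IndPlus_nonneg {P Q : ℝ[X]} {c : ℝ} (h : ¬ pval P Q c < 0) : IndPlus P Q c = 0 := by
  rw [IndPlus, if_neg]; tauto

lemma IndPlus_zero_left {P Q : ℝ[X]} {c : ℝ} (h : P = 0) : IndPlus P Q c = 0 := by
  rw [IndPlus, if_neg]; tauto

lemma IndPlus_zero_right {P Q : ℝ[X]} {c : ℝ} (h : Q = 0) : IndPlus P Q c = 0 := by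
  rw [IndPlus, if_neg]; tauto

lemma SignAt_pos {P Q : ℝ[X]} {c : ℝ} (hP : P ≠ 0) (hQ : Q ≠ 0) (h : pval P Q c = 0) :
    SignAt P Q c = sR (P*Q) c := by
  rw [SignAt, if_pos ⟨hP, hQ, h⟩, sR_mul, sR, sR, ← rsign_mul]

lemma SignAt_ne {P Q : ℝ[X]} {c : ℝ} (h : ¬ pval P Q c = 0) : SignAt P Q c = 0 := by
  rw [SignAt, if_neg]; tauto

lemma SignAt_zero_left {P Q : ℝ[X]} {c : ℝ} (h : P = 0) : SignAt P Q c = 0 := by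
  rw [SignAt, if_neg]; tauto

lemma SignAt_zero_right {P Q : ℝ[X]} {c : ℝ} (h : Q = 0) : SignAt P Q c = 0 := by
  rw [SignAt, if_neg]; tauto

lemma sign_add_cases {x y : ℝ} (hx : x ≠ 0) (hy : y ≠ 0) :
    Real.sign x = - Real.sign y ∨ Real.sign (x + y) = Real.sign x := by
  rcases lt_trichotomy x 0 with h1|h1|h1
  · rcases lt_trichotomy y 0 with h2|h2|h2
    · right; rw [Real.sign_of_neg h1, Real.sign_of_neg (by linarith : x + y < 0)]
    · exact absurd h2 hy
    · left; rw [Real.sign_of_neg h1, Real.sign_of_pos h2]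
  · exact absurd h1 hx
  · rcases lt_trichotomy y 0 with h2|h2|h2
    · left; rw [Real.sign_of_pos h1, Real.sign_of_neg h2]; norm_num
    · exact absurd h2 hy
    · right; rw [Real.sign_of_pos h1, Real.sign_of_pos (by linarith : 0 < x + y)]

lemma sign_sub_of_mul_neg {x y : ℝ} (h : x * y < 0) :
    x - y ≠ 0 ∧ Real.sign (x - y) = - Real.sign y := by
  rcases lt_trichotomy x 0 with h1|h1|h1
  · have h2 : 0 < y := by nlinarith
    exact ⟨by intro h0; nlinarith, by
      rw [Real.sign_of_neg (by linarith : x - y < 0), Real.sign_of_pos h2]⟩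
  · exfalso; rw [h1] at h; simp at h
  · have h2 : y < 0 := by nlinarith
    exact ⟨by intro h0; nlinarith, by
      rw [Real.sign_of_pos (by linarith : 0 < x - y), Real.sign_of_neg h2]; norm_num⟩

lemma sR_def (F : ℝ[X]) (c : ℝ) : sR F c = Real.sign ((pPart F c).eval c) := rfl

lemma sum_cancel' {F G : ℝ[X]} {c : ℝ}
    (hm : F.rootMultiplicity c = G.rootMultiplicity c)
    (hsum : (pPart F c).eval c + (pPart G c).eval c = 0) (hne : F + G ≠ 0) :
    F.rootMultiplicity c < (F + G).rootMultiplicity c := by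
  have hd : F + G = (X - C c) ^ (F.rootMultiplicity c) * (pPart F c + pPart G c) := by
    conv_lhs => rw [pPart_spec (F := F) c, pPart_spec (F := G) c]
    rw [hm, mul_add]
  have hH : pPart F c + pPart G c ≠ 0 := by
    intro h0; rw [h0, mul_zero] at hd; exact hne hd
  have hmul : (F + G).rootMultiplicity c =
      F.rootMultiplicity c + (pPart F c + pPart G c).rootMultiplicity c := by
    rw [hd, rootMultiplicity_mul (by rw [← hd]; exact hne), rootMultiplicity_X_sub_C_pow]
  have hpos : 0 < (pPart F c + pPart G c).rootMultiplicity c :=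
    (rootMultiplicity_pos hH).2 (by rw [IsRoot, eval_add]; exact hsum)
  omega

lemma sR_of_cancel {F G : ℝ[X]} {c : ℝ}
    (h : (pPart G c).eval c = -((pPart F c).eval c)) : sR G c = - sR F c := by
  rw [sR_def, h, rsign_neg']; rfl

lemma BadNumber_swap {P Q R S : ℝ[X]} {c : ℝ} (h : BadNumber R S P Q c) :
    BadNumber P Q R S c := by
  obtain ⟨hR, hS, hP, hQ, hB, h1, h2, h3⟩ := h
  have e1 : R * Q + S * P = P * S + Q * R := by ring
  refine ⟨hP, hQ, hR, hS, by rwa [e1] at hB, h1.symm, h1 ▸ h2, ?_⟩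
  rwa [e1, mul_comm S Q] at h3

lemma locR_main (P Q R S : ℝ[X]) (c : ℝ) (hP : P ≠ 0) (hQ : Q ≠ 0) (hR : R ≠ 0) (hS : S ≠ 0)
    (hB : P*S + Q*R ≠ 0) (hc : ¬ BadNumber P Q R S c)
    (huv : pval P Q c ≤ pval R S c) :
    IndPlus (P*R - Q*S) (P*S + Q*R) c
      = IndPlus P Q c + IndPlus R S c
        - 1/2 * sR ((P*S + Q*R) * (Q*S)) c + 1/2 * SignAt (P*S + Q*R) (Q*S) c := by
  have hQS : Q*S ≠ 0 := mul_ne_zero hQ hS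
  have hPR : P*R ≠ 0 := mul_ne_zero hP hR
  have hPS : P*S ≠ 0 := mul_ne_zero hP hS
  have hQR : Q*R ≠ 0 := mul_ne_zero hQ hR
  have hNQS : -(Q*S) ≠ 0 := neg_ne_zero.2 hQS
  have hAeq2 : P*R - Q*S = P*R + -(Q*S) := by ring
  have hmPR : (P*R).rootMultiplicity c = P.rootMultiplicity c + R.rootMultiplicity c :=
    rootMultiplicity_mul'' hP hR c
  have hmPS : (P*S).rootMultiplicity c = P.rootMultiplicity c + S.rootMultiplicity c :=
    rootMultiplicity_mul'' hP hS c
  have hmQR : (Q*R).rootMultiplicity c = Q.rootMultiplicity c + R.rootMultiplicity c :=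
    rootMultiplicity_mul'' hQ hR c
  have hmQS : (Q*S).rootMultiplicity c = Q.rootMultiplicity c + S.rootMultiplicity c :=
    rootMultiplicity_mul'' hQ hS c
  have hmNQS : (-(Q*S)).rootMultiplicity c = Q.rootMultiplicity c + S.rootMultiplicity c := by
    rw [rootMultiplicity_neg, hmQS]
  have hsNQS : sR (-(Q*S)) c = -(sR Q c * sR S c) := by rw [sR_neg, sR_mul]
  have sqP := sR_sq hP c
  have sqQ := sR_sq hQ c
  have sqR := sR_sq hR c
  have sqS := sR_sq hS c
  rw [pval_def, pval_def] at huv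
  rcases lt_trichotomy (pval P Q c) 0 with hu|hu|hu <;> rw [pval_def] at hu
  · -- u < 0
    rcases lt_trichotomy (pval R S c) 0 with hv|hv|hv <;> rw [pval_def] at hv
    · -- v < 0
      by_cases huv2 : P.rootMultiplicity c + S.rootMultiplicity c <
          Q.rootMultiplicity c + R.rootMultiplicity c
      · -- C5 : u < v < 0
        obtain ⟨hB1, hB2, hB3⟩ := sum_dom hPS hQR (by rw [hmPS, hmQR]; omega)
        obtain ⟨hA1, hA2, hA3⟩ := sum_dom hPR hNQS (by rw [hmPR, hmNQS]; omega)
        have hA1' : P*R - Q*S ≠ 0 := by rw [hAeq2]; exact hA1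
        have hA2' : (P*R - Q*S).rootMultiplicity c
            = P.rootMultiplicity c + R.rootMultiplicity c := by rw [hAeq2, hA2, hmPR]
        have hA3' : sR (P*R - Q*S) c = sR P c * sR R c := by rw [hAeq2, hA3, sR_mul]
        rw [IndPlus_pos hA1' hB (by rw [pval_def, hA2', hB2, hmPS]; omega),
            IndPlus_pos hP hQ (by rw [pval_def]; omega),
            IndPlus_pos hR hS (by rw [pval_def]; omega),
            SignAt_ne (by rw [pval_def, hB2, hmPS, hmQS]; omega)]
        simp only [sR_mul, hA3', hB3]
        linear_combination (1/2 * sR R c * sR S c) * sqP + (1/2 * sR P c * sR Q c) * sqS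
      · -- C6 : u = v < 0
        have heq : P.rootMultiplicity c + S.rootMultiplicity c
            = Q.rootMultiplicity c + R.rootMultiplicity c := by omega
        obtain ⟨hA1, hA2, hA3⟩ := sum_dom hPR hNQS (by rw [hmPR, hmNQS]; omega)
        have hA1' : P*R - Q*S ≠ 0 := by rw [hAeq2]; exact hA1
        have hA2' : (P*R - Q*S).rootMultiplicity c
            = P.rootMultiplicity c + R.rootMultiplicity c := by rw [hAeq2, hA2, hmPR]
        have hA3' : sR (P*R - Q*S) c = sR P c * sR R c := by rw [hAeq2, hA3, sR_mul]
        by_cases hsum : (pPart (P*S) c).eval c + (pPart (Q*R) c).eval c = 0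
        · -- cancellation in B
          have hbgt := sum_cancel' (by rw [hmPS, hmQR]; exact heq) hsum hB
          rw [hmPS] at hbgt
          by_cases hval : ((P*S + Q*R).rootMultiplicity c : ℤ)
              = Q.rootMultiplicity c + S.rootMultiplicity c
          · exact absurd ⟨hP, hQ, hR, hS, hB, by rw [pval_def, pval_def]; omega,
              by rw [pval_def]; omega, by rw [pval_def, hmQS]; omega⟩ hc
          · have hrel : sR (Q*R) c = - sR (P*S) c :=
              sR_of_cancel (by linarith [hsum])
            rw [sR_mul, sR_mul] at hrel
            have heq2 : sR P c * sR S c + sR Q c * sR R c = 0 := by linarith [hrel]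
            have hQexpr : sR Q c = -(sR P c * sR S c * sR R c) := by
              linear_combination sR R c * heq2 - sR Q c * sqR
            rw [IndPlus_pos hA1' hB (by rw [pval_def, hA2']; omega),
                IndPlus_pos hP hQ (by rw [pval_def]; omega),
                IndPlus_pos hR hS (by rw [pval_def]; omega),
                SignAt_ne (by rw [pval_def, hmQS]; omega)]
            simp only [sR_mul, hA3']
            rw [hQexpr]
            rcases sR_ne_zero hP c with h1|h1 <;> rcases sR_ne_zero hR c with h3|h3 <;>
              rcases sR_ne_zero hS c with h4|h4 <;> rcases sR_ne_zero hB c with h5|h5 <;>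
              rw [h1, h3, h4, h5] <;> norm_num
        · -- no cancellation in B
          obtain ⟨hB1, hB2, hB3⟩ := sum_eq_of_ne hPS hQR (by rw [hmPS, hmQR]; exact heq) hsum
          rcases sign_add_cases (pPart_eval_ne_zero hPS c) (pPart_eval_ne_zero hQR c)
            with hrel|hrel
          · have heq2 : sR (P*S) c + sR (Q*R) c = 0 := by
              rw [sR_def, sR_def]; linarith [hrel]
            rw [sR_mul, sR_mul] at heq2
            have hQexpr : sR Q c = -(sR P c * sR S c * sR R c) := by
              linear_combination sR R c * heq2 - sR Q c * sqR
            rw [IndPlus_pos hA1' hB (by rw [pval_def, hA2', hB2, hmPS]; omega),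
                IndPlus_pos hP hQ (by rw [pval_def]; omega),
                IndPlus_pos hR hS (by rw [pval_def]; omega),
                SignAt_ne (by rw [pval_def, hB2, hmPS, hmQS]; omega)]
            simp only [sR_mul, hA3']
            rw [hQexpr]
            rcases sR_ne_zero hP c with h1|h1 <;> rcases sR_ne_zero hR c with h3|h3 <;>
              rcases sR_ne_zero hS c with h4|h4 <;> rcases sR_ne_zero hB c with h5|h5 <;>
              rw [h1, h3, h4, h5] <;> norm_num
          · have hB3' : sR (P*S + Q*R) c = sR (P*S) c := by rw [hB3, hrel]; rfl
            rw [IndPlus_pos hA1' hB (by rw [pval_def, hA2', hB2, hmPS]; omega),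
                IndPlus_pos hP hQ (by rw [pval_def]; omega),
                IndPlus_pos hR hS (by rw [pval_def]; omega),
                SignAt_ne (by rw [pval_def, hB2, hmPS, hmQS]; omega)]
            simp only [sR_mul, hA3', hB3']
            linear_combination (1/2 * sR R c * sR S c) * sqP + (1/2 * sR P c * sR Q c) * sqS
    · -- C4b : u < 0 = v
      obtain ⟨hB1, hB2, hB3⟩ := sum_dom hPS hQR (by rw [hmPS, hmQR]; omega)
      have hval : ¬ pval (P*S + Q*R) (Q*S) c = 0 := by rw [pval_def, hB2, hmPS, hmQS]; omega
      rw [IndPlus_pos hP hQ (by rw [pval_def]; omega),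
          IndPlus_nonneg (P := R) (Q := S) (by rw [pval_def]; omega),
          SignAt_ne hval]
      have hIA : IndPlus (P*R - Q*S) (P*S + Q*R) c = 0 := by
        by_cases hA0 : P*R - Q*S = 0
        · exact IndPlus_zero_left hA0
        · have hzero : P*R + -(Q*S) ≠ 0 := by rw [← hAeq2]; exact hA0
          have hamin := rootMultiplicity_add (p := P*R) (q := -(Q*S)) c hzero
          rw [hmPR, hmNQS, ← hAeq2] at hamin
          exact IndPlus_nonneg (by rw [pval_def, hB2, hmPS]; omega)
      rw [hIA]
      simp only [sR_mul, hB3]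
      linear_combination (1/2 * sR P c * sR Q c) * sqS
    · -- C4a : u < 0 < v
      obtain ⟨hB1, hB2, hB3⟩ := sum_dom hPS hQR (by rw [hmPS, hmQR]; omega)
      have hval : ¬ pval (P*S + Q*R) (Q*S) c = 0 := by rw [pval_def, hB2, hmPS, hmQS]; omega
      rw [IndPlus_pos hP hQ (by rw [pval_def]; omega),
          IndPlus_nonneg (P := R) (Q := S) (by rw [pval_def]; omega),
          SignAt_ne hval]
      have hIA : IndPlus (P*R - Q*S) (P*S + Q*R) c = 0 := by
        by_cases hA0 : P*R - Q*S = 0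
        · exact IndPlus_zero_left hA0
        · have hzero : P*R + -(Q*S) ≠ 0 := by rw [← hAeq2]; exact hA0
          have hamin := rootMultiplicity_add (p := P*R) (q := -(Q*S)) c hzero
          rw [hmPR, hmNQS, ← hAeq2] at hamin
          exact IndPlus_nonneg (by rw [pval_def, hB2, hmPS]; omega)
      rw [hIA]
      simp only [sR_mul, hB3]
      linear_combination (1/2 * sR P c * sR Q c) * sqS
  · -- u = 0
    rcases lt_trichotomy (pval R S c) 0 with hv|hv|hv <;> rw [pval_def] at hv
    · omega
    · -- C2 : u = 0 = v
      have heqA : (P*R).rootMultiplicity c = (-(Q*S)).rootMultiplicity c := by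
        rw [hmPR, hmNQS]; omega
      by_cases hb0 : (P*S + Q*R).rootMultiplicity c
          = P.rootMultiplicity c + S.rootMultiplicity c
      · -- C2a : no cancellation in B
        have hval : pval (P*S + Q*R) (Q*S) c = 0 := by rw [pval_def, hb0, hmQS]; omega
        rw [IndPlus_nonneg (P := P) (Q := Q) (by rw [pval_def]; omega),
            IndPlus_nonneg (P := R) (Q := S) (by rw [pval_def]; omega),
            SignAt_pos hB hQS hval]
        have hIA : IndPlus (P*R - Q*S) (P*S + Q*R) c = 0 := by
          by_cases hA0 : P*R - Q*S = 0
          · exact IndPlus_zero_left hA0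
          · have hzero : P*R + -(Q*S) ≠ 0 := by rw [← hAeq2]; exact hA0
            have hamin := rootMultiplicity_add (p := P*R) (q := -(Q*S)) c hzero
            rw [hmPR, hmNQS, ← hAeq2] at hamin
            exact IndPlus_nonneg (by rw [pval_def, hb0]; omega)
        rw [hIA]; ring
      · -- C2b : cancellation in B
        have hbmin := rootMultiplicity_add (p := P*S) (q := Q*R) c hB
        rw [hmPS, hmQR] at hbmin
        have hbgt : P.rootMultiplicity c + S.rootMultiplicity c
            < (P*S + Q*R).rootMultiplicity c := by omega
        have hcanc := sum_cancel hPS hQR (by rw [hmPS, hmQR]; omega)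
          (Or.inr (by rw [hmPS]; exact hbgt))
        rw [pPart_mul, pPart_mul, eval_mul, eval_mul] at hcanc
        have heP := pPart_eval_ne_zero hP c
        have heQ := pPart_eval_ne_zero hQ c
        have heR := pPart_eval_ne_zero hR c
        have heS := pPart_eval_ne_zero hS c
        have h1 : (pPart P c).eval c * (pPart S c).eval c ≠ 0 := mul_ne_zero heP heS
        have hprod : (pPart (P*R) c).eval c * (pPart (Q*S) c).eval c < 0 := by
          rw [pPart_mul, pPart_mul, eval_mul, eval_mul]
          have h2 : (pPart P c).eval c * (pPart R c).eval c
              * ((pPart Q c).eval c * (pPart S c).eval c)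
              = -((pPart P c).eval c * (pPart S c).eval c
                  * ((pPart P c).eval c * (pPart S c).eval c)) := by
            linear_combination ((pPart P c).eval c * (pPart S c).eval c) * hcanc
          rw [h2]
          have h3 := mul_self_pos.2 h1
          linarith
        obtain ⟨hne, hsg⟩ := sign_sub_of_mul_neg hprod
        obtain ⟨hA1, hA2, hA3⟩ := sum_eq_of_ne hPR hNQS heqA
          (by rw [pPart_neg, eval_neg, ← sub_eq_add_neg]; exact hne)
        have hA1' : P*R - Q*S ≠ 0 := by rw [hAeq2]; exact hA1
        have hA2' : (P*R - Q*S).rootMultiplicity c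
            = P.rootMultiplicity c + R.rootMultiplicity c := by rw [hAeq2, hA2, hmPR]
        have hA3' : sR (P*R - Q*S) c = -(sR Q c * sR S c) := by
          rw [hAeq2, hA3, pPart_neg, eval_neg, ← sub_eq_add_neg, hsg, ← sR_def, sR_mul]
        rw [IndPlus_pos hA1' hB (by rw [pval_def, hA2']; omega),
            IndPlus_nonneg (P := P) (Q := Q) (by rw [pval_def]; omega),
            IndPlus_nonneg (P := R) (Q := S) (by rw [pval_def]; omega),
            SignAt_ne (by rw [pval_def, hmQS]; omega)]
        simp only [sR_mul, hA3']
        ring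
    · -- C3 : u = 0 < v
      obtain ⟨hB1, hB2, hB3⟩ := sum_dom hPS hQR (by rw [hmPS, hmQR]; omega)
      obtain ⟨hA1, hA2, hA3⟩ := sum_dom hNQS hPR (by rw [hmPR, hmNQS]; omega)
      have hA1' : P*R - Q*S ≠ 0 := by rw [hAeq2, add_comm]; exact hA1
      have hA2' : (P*R - Q*S).rootMultiplicity c
          = Q.rootMultiplicity c + S.rootMultiplicity c := by
        rw [hAeq2, add_comm, hA2, hmNQS]
      have hval : pval (P*S + Q*R) (Q*S) c = 0 := by
        rw [pval_def, hB2, hmPS, hmQS]; omega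
      rw [IndPlus_nonneg (P := P) (Q := Q) (by rw [pval_def]; omega),
          IndPlus_nonneg (P := R) (Q := S) (by rw [pval_def]; omega),
          IndPlus_nonneg (P := P*R - Q*S) (Q := P*S + Q*R)
            (by rw [pval_def, hA2', hB2, hmPS]; omega),
          SignAt_pos hB hQS hval]
      ring
  · -- u > 0, so v > 0 : C1
    have hv : (0:ℤ) < (R.rootMultiplicity c : ℤ) - S.rootMultiplicity c := by omega
    obtain ⟨hA1, hA2, hA3⟩ := sum_dom hNQS hPR (by rw [hmPR, hmNQS]; omega)
    have hA1' : P*R - Q*S ≠ 0 := by rw [hAeq2, add_comm]; exact hA1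
    have hA2' : (P*R - Q*S).rootMultiplicity c
        = Q.rootMultiplicity c + S.rootMultiplicity c := by
      rw [hAeq2, add_comm, hA2, hmNQS]
    have hA3' : sR (P*R - Q*S) c = -(sR Q c * sR S c) := by
      rw [hAeq2, add_comm, hA3, hsNQS]
    have hbmin := rootMultiplicity_add (p := P*S) (q := Q*R) c hB
    rw [hmPS, hmQR] at hbmin
    rw [IndPlus_nonneg (P := P) (Q := Q) (by rw [pval_def]; omega),
        IndPlus_nonneg (P := R) (Q := S) (by rw [pval_def]; omega),
        IndPlus_pos hA1' hB (by rw [pval_def, hA2']; omega),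
        SignAt_ne (by rw [pval_def, hmQS]; omega)]
    simp only [sR_mul, hA3']
    ring


lemma locR (P Q R S : ℝ[X]) (c : ℝ) (hPQ : ¬ (P = 0 ∧ Q = 0)) (hRS : ¬ (R = 0 ∧ S = 0))
    (hc : ¬ BadNumber P Q R S c) :
    IndPlus (P*R - Q*S) (P*S + Q*R) c
      = IndPlus P Q c + IndPlus R S c
        - 1/2 * sR ((P*S + Q*R) * (Q*S)) c + 1/2 * SignAt (P*S + Q*R) (Q*S) c := by
  by_cases hB0 : P*S + Q*R = 0
  · rw [IndPlus_zero_right hB0, SignAt_zero_left hB0, hB0, zero_mul, sR_zero]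
    by_cases hP0 : P = 0
    · have hQ0 : Q ≠ 0 := fun h => hPQ ⟨hP0, h⟩
      have hR0 : R = 0 := by
        rcases mul_eq_zero.1 (by simpa [hP0] using hB0 : Q * R = 0) with h|h
        · exact absurd h hQ0
        · exact h
      rw [IndPlus_zero_left hP0, IndPlus_zero_left hR0]; ring
    by_cases hQ0 : Q = 0
    · have hS0 : S = 0 := by
        rcases mul_eq_zero.1 (by simpa [hQ0] using hB0 : P * S = 0) with h|h
        · exact absurd h hP0
        · exact h
      rw [IndPlus_zero_right hQ0, IndPlus_zero_right hS0]; ring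
    by_cases hR0 : R = 0
    · have hS0 : S = 0 := by
        rcases mul_eq_zero.1 (by simpa [hR0] using hB0 : P * S = 0) with h|h
        · exact absurd h hP0
        · exact h
      exact absurd ⟨hR0, hS0⟩ hRS
    by_cases hS0 : S = 0
    · have : Q * R = 0 := by simpa [hS0] using hB0
      rcases mul_eq_zero.1 this with h|h
      · exact absurd h hQ0
      · exact absurd h hR0
    -- all nonzero, P*S = -(Q*R)
    have hPSeq : P * S = -(Q * R) := by linear_combination hB0
    have hm1 : (P*S).rootMultiplicity c = (-(Q*R)).rootMultiplicity c := by rw [hPSeq]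
    rw [rootMultiplicity_mul'' hP0 hS0, rootMultiplicity_neg,
      rootMultiplicity_mul'' hQ0 hR0] at hm1
    have hs1 : sR (P*S) c = sR (-(Q*R)) c := by rw [hPSeq]
    rw [sR_mul, sR_neg, sR_mul] at hs1
    rcases lt_or_ge (pval P Q c) 0 with hu|hu
    · rw [IndPlus_pos hP0 hQ0 hu, IndPlus_pos hR0 hS0
        (by rw [pval_def] at hu ⊢; omega), sR_mul, sR_mul]
      have sqP := sR_sq hP0 c
      have sqQ := sR_sq hQ0 c
      have sqR := sR_sq hR0 c
      have sqS := sR_sq hS0 c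
      have hQexpr : sR Q c = -(sR P c * sR S c * sR R c) := by
        have heq2 : sR P c * sR S c + sR Q c * sR R c = 0 := by linarith [hs1]
        linear_combination sR R c * heq2 - sR Q c * sqR
      rw [hQexpr]
      rcases sR_ne_zero hP0 c with h1|h1 <;> rcases sR_ne_zero hR0 c with h3|h3 <;>
        rcases sR_ne_zero hS0 c with h4|h4 <;> rw [h1, h3, h4] <;> norm_num
    · rw [IndPlus_nonneg (not_lt.2 hu), IndPlus_nonneg (P := R) (Q := S)
        (by rw [pval_def] at hu ⊢; omega)]
      ring
  -- B ≠ 0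
  by_cases hP0 : P = 0
  · have hQ0 : Q ≠ 0 := fun h => hPQ ⟨hP0, h⟩
    have hA : P*R - Q*S = -(Q*S) := by rw [hP0]; ring
    have hBeq : P*S + Q*R = Q*R := by rw [hP0]; ring
    rw [hA, hBeq, IndPlus_zero_left hP0]
    have hR0 : R ≠ 0 := by intro h; exact hB0 (by rw [hBeq, h, mul_zero])
    by_cases hS0 : S = 0
    · subst hS0
      simp only [mul_zero, neg_zero]
      rw [IndPlus_zero_left rfl, IndPlus_zero_right rfl, sR_zero, SignAt_zero_right rfl]
      ring
    have hQS : Q*S ≠ 0 := mul_ne_zero hQ0 hS0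
    have hQR : Q*R ≠ 0 := mul_ne_zero hQ0 hR0
    have hmQS := rootMultiplicity_mul'' hQ0 hS0 c
    have hmQR := rootMultiplicity_mul'' hQ0 hR0 c
    have hmN : (-(Q*S)).rootMultiplicity c = Q.rootMultiplicity c + S.rootMultiplicity c := by
      rw [rootMultiplicity_neg, hmQS]
    have sqQ := sR_sq hQ0 c
    rcases lt_trichotomy (pval R S c) 0 with hv|hv|hv <;> rw [pval_def] at hv
    · rw [IndPlus_pos hR0 hS0 (by rw [pval_def]; omega),
        IndPlus_nonneg (by rw [pval_def, hmN, hmQR]; omega),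
        SignAt_ne (by rw [pval_def, hmQR, hmQS]; omega)]
      simp only [sR_mul]
      linear_combination (1/2 * sR R c * sR S c) * sqQ
    · rw [IndPlus_nonneg (P := R) (Q := S) (by rw [pval_def]; omega),
        IndPlus_nonneg (by rw [pval_def, hmN, hmQR]; omega),
        SignAt_pos hQR hQS (by rw [pval_def, hmQR, hmQS]; omega)]
      ring
    · rw [IndPlus_nonneg (P := R) (Q := S) (by rw [pval_def]; omega),
        IndPlus_pos (neg_ne_zero.2 hQS) hQR (by rw [pval_def, hmN, hmQR]; omega),
        SignAt_ne (by rw [pval_def, hmQR, hmQS]; omega)]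
      simp only [sR_mul, sR_neg]
      ring
  by_cases hQ0 : Q = 0
  · have hA : P*R - Q*S = P*R := by rw [hQ0]; ring
    have hBeq : P*S + Q*R = P*S := by rw [hQ0]; ring
    have hQS : Q*S = 0 := by rw [hQ0, zero_mul]
    rw [hA, hBeq, IndPlus_zero_right hQ0, SignAt_zero_right hQS, hQS, mul_zero, sR_zero]
    have hS0 : S ≠ 0 := by intro h; exact hB0 (by rw [hBeq, h, mul_zero])
    by_cases hR0 : R = 0
    · rw [hR0, mul_zero, IndPlus_zero_left rfl, IndPlus_zero_left rfl]; ring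
    have hmPR := rootMultiplicity_mul'' hP0 hR0 c
    have hmPS := rootMultiplicity_mul'' hP0 hS0 c
    have sqP := sR_sq hP0 c
    rcases lt_or_ge (pval R S c) 0 with hv|hv
    · rw [IndPlus_pos hR0 hS0 hv, IndPlus_pos (mul_ne_zero hP0 hR0) (mul_ne_zero hP0 hS0)
        (by rw [pval_def] at hv ⊢; rw [hmPR, hmPS]; omega)]
      simp only [sR_mul]
      linear_combination (1/2 * sR R c * sR S c) * sqP
    · rw [IndPlus_nonneg (not_lt.2 hv), IndPlus_nonneg
        (by rw [pval_def] at hv ⊢; rw [hmPR, hmPS]; omega)]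
      ring
  by_cases hR0 : R = 0
  · have hA : P*R - Q*S = -(Q*S) := by rw [hR0]; ring
    have hBeq : P*S + Q*R = P*S := by rw [hR0]; ring
    rw [hA, hBeq, IndPlus_zero_left hR0]
    have hS0 : S ≠ 0 := by intro h; exact hB0 (by rw [hBeq, h, mul_zero])
    have hQS : Q*S ≠ 0 := mul_ne_zero hQ0 hS0
    have hPS : P*S ≠ 0 := mul_ne_zero hP0 hS0
    have hmQS := rootMultiplicity_mul'' hQ0 hS0 c
    have hmPS := rootMultiplicity_mul'' hP0 hS0 c
    have hmN : (-(Q*S)).rootMultiplicity c = Q.rootMultiplicity c + S.rootMultiplicity c := by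
      rw [rootMultiplicity_neg, hmQS]
    have sqS := sR_sq hS0 c
    rcases lt_trichotomy (pval P Q c) 0 with hu|hu|hu <;> rw [pval_def] at hu
    · rw [IndPlus_pos hP0 hQ0 (by rw [pval_def]; omega),
        IndPlus_nonneg (by rw [pval_def, hmN, hmPS]; omega),
        SignAt_ne (by rw [pval_def, hmPS, hmQS]; omega)]
      simp only [sR_mul]
      linear_combination (1/2 * sR P c * sR Q c) * sqS
    · rw [IndPlus_nonneg (P := P) (Q := Q) (by rw [pval_def]; omega),
        IndPlus_nonneg (by rw [pval_def, hmN, hmPS]; omega),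
        SignAt_pos hPS hQS (by rw [pval_def, hmPS, hmQS]; omega)]
      ring
    · rw [IndPlus_nonneg (P := P) (Q := Q) (by rw [pval_def]; omega),
        IndPlus_pos (neg_ne_zero.2 hQS) hPS (by rw [pval_def, hmN, hmPS]; omega),
        SignAt_ne (by rw [pval_def, hmPS, hmQS]; omega)]
      simp only [sR_mul, sR_neg]
      ring
  by_cases hS0 : S = 0
  · have hA : P*R - Q*S = P*R := by rw [hS0]; ring
    have hBeq : P*S + Q*R = Q*R := by rw [hS0]; ring
    have hQS : Q*S = 0 := by rw [hS0, mul_zero]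
    rw [hA, hBeq, IndPlus_zero_right hS0, SignAt_zero_right hQS, hQS, mul_zero, sR_zero]
    have hmPR := rootMultiplicity_mul'' hP0 hR0 c
    have hmQR := rootMultiplicity_mul'' hQ0 hR0 c
    have sqR := sR_sq hR0 c
    rcases lt_or_ge (pval P Q c) 0 with hu|hu
    · rw [IndPlus_pos hP0 hQ0 hu, IndPlus_pos (mul_ne_zero hP0 hR0) (mul_ne_zero hQ0 hR0)
        (by rw [pval_def] at hu ⊢; rw [hmPR, hmQR]; omega)]
      simp only [sR_mul]
      linear_combination (1/2 * sR P c * sR Q c) * sqR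
    · rw [IndPlus_nonneg (not_lt.2 hu), IndPlus_nonneg
        (by rw [pval_def] at hu ⊢; rw [hmPR, hmQR]; omega)]
      ring
  -- all nonzero
  rcases le_total (pval P Q c) (pval R S c) with huv|huv
  · exact locR_main P Q R S c hP0 hQ0 hR0 hS0 hB0 hc huv
  · have hB0' : R*Q + S*P ≠ 0 := by
      intro h; exact hB0 (by linear_combination h)
    have hc' : ¬ BadNumber R S P Q c := fun hb => hc (BadNumber_swap hb)
    have := locR_main R S P Q c hR0 hS0 hP0 hQ0 hB0' hc' huv
    rw [show R*P - S*Q = P*R - Q*S from by ring, show R*Q + S*P = P*S + Q*R from by ring,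
      show S*Q = Q*S from mul_comm S Q] at this
    rw [this]; ring

/-! ### reflection -/

lemma rsign_neg_one_pow (m : ℕ) : Real.sign ((-1:ℝ)^m) = (-1:ℝ)^m := by
  rcases Nat.even_or_odd m with h|h
  · rw [h.neg_one_pow, Real.sign_one]
  · rw [h.neg_one_pow]
    rw [show ((-1:ℝ)) = -(1:ℝ) from rfl, rsign_neg', Real.sign_one]

lemma neg_one_zpow_eq (p q : ℕ) : ((-1:ℝ)) ^ ((p:ℤ) - q) = (-1:ℝ) ^ (p + q) := by
  have h1 : ((-1:ℝ)) ^ ((p:ℤ) - q) = ((-1:ℝ)^(p:ℤ)) / ((-1:ℝ)^(q:ℤ)) :=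
    zpow_sub₀ (by norm_num) _ _
  rw [h1, zpow_natCast, zpow_natCast, pow_add]
  rcases Nat.even_or_odd q with h|h
  · rw [h.neg_one_pow]; ring
  · rw [h.neg_one_pow]; ring

lemma comp_neg_comp_neg (F : ℝ[X]) : (F.comp (-X)).comp (-X) = F := by
  rw [comp_assoc, neg_comp, X_comp, neg_neg, comp_X]

lemma comp_neg_ne_zero {F : ℝ[X]} (hF : F ≠ 0) : F.comp (-X) ≠ 0 := by
  intro h
  have := comp_neg_comp_neg F
  rw [h, zero_comp] at this
  exact hF this.symm

lemma refl_decomp (F : ℝ[X]) (c : ℝ) (hF : F ≠ 0) :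
    (F.comp (-X)).rootMultiplicity (-c) = F.rootMultiplicity c ∧
    (pPart (F.comp (-X)) (-c)).eval (-c) = (-1:ℝ)^(F.rootMultiplicity c) * (pPart F c).eval c := by
  set m := F.rootMultiplicity c with hm
  have hdec : F.comp (-X) = (X - C (-c)) ^ m * (((-1:ℝ[X]))^m * (pPart F c).comp (-X)) := by
    conv_lhs => rw [pPart_spec (F := F) c]
    rw [mul_comp, pow_comp, sub_comp, X_comp, C_comp]
    have h2 : (-X - C c : ℝ[X]) = -(X - C (-c)) := by rw [map_neg]; ring
    rw [h2, neg_pow]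
    ring
  have heval : ((((-1:ℝ[X]))^m * (pPart F c).comp (-X))).eval (-c)
      = (-1:ℝ)^m * (pPart F c).eval c := by
    rw [eval_mul, eval_pow, eval_neg, eval_one, eval_comp, eval_neg, eval_X, neg_neg]
  have hne : ((((-1:ℝ[X]))^m * (pPart F c).comp (-X))).eval (-c) ≠ 0 := by
    rw [heval]
    exact mul_ne_zero (pow_ne_zero _ (by norm_num)) (pPart_eval_ne_zero hF c)
  obtain ⟨h1, h2⟩ := part_unique hne hdec
  exact ⟨h1, by rw [h2, heval]⟩

lemma refl_mult (F : ℝ[X]) (c : ℝ) :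
    (F.comp (-X)).rootMultiplicity (-c) = F.rootMultiplicity c := by
  by_cases hF : F = 0
  · rw [hF, zero_comp]; simp
  · exact (refl_decomp F c hF).1

lemma refl_sR (F : ℝ[X]) (c : ℝ) : sR (F.comp (-X)) (-c) = sL F c := by
  by_cases hF : F = 0
  · rw [hF, zero_comp, sR_zero, sL_zero]
  · rw [sR_def, (refl_decomp F c hF).2, sL, rsign_mul, rsign_neg_one_pow, sR_def]

lemma pval_reflect (P Q : ℝ[X]) (c : ℝ) :
    pval (P.comp (-X)) (Q.comp (-X)) (-c) = pval P Q c := by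
  rw [pval_def, pval_def, refl_mult, refl_mult]

lemma IndMinus_zero_left {P Q : ℝ[X]} {c : ℝ} (h : P = 0) : IndMinus P Q c = 0 := by
  rw [IndMinus, if_neg]; tauto

lemma IndMinus_zero_right {P Q : ℝ[X]} {c : ℝ} (h : Q = 0) : IndMinus P Q c = 0 := by
  rw [IndMinus, if_neg]; tauto

lemma IndMinus_nonneg {P Q : ℝ[X]} {c : ℝ} (h : ¬ pval P Q c < 0) : IndMinus P Q c = 0 := by
  rw [IndMinus, if_neg]; tauto

lemma IndMinus_pos {P Q : ℝ[X]} {c : ℝ} (hP : P ≠ 0) (hQ : Q ≠ 0) (h : pval P Q c < 0) :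
    IndMinus P Q c = 1/2 * (-1:ℝ)^(P.rootMultiplicity c + Q.rootMultiplicity c) * sR (P*Q) c := by
  rw [IndMinus, if_pos ⟨hP, hQ, h⟩, sR_mul, sR_def, sR_def, ← rsign_mul, pval_def,
    neg_one_zpow_eq]

lemma sL_eq (F : ℝ[X]) (c : ℝ) : sL F c = (-1:ℝ)^(F.rootMultiplicity c) * sR F c := rfl

lemma IndMinus_reflect (P Q : ℝ[X]) (c : ℝ) :
    IndMinus P Q c = IndPlus (P.comp (-X)) (Q.comp (-X)) (-c) := by
  by_cases hP : P = 0
  · rw [IndMinus_zero_left hP, IndPlus_zero_left (by rw [hP, zero_comp])]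
  by_cases hQ : Q = 0
  · rw [IndMinus_zero_right hQ, IndPlus_zero_right (by rw [hQ, zero_comp])]
  by_cases hlt : pval P Q c < 0
  · rw [IndMinus_pos hP hQ hlt,
      IndPlus_pos (comp_neg_ne_zero hP) (comp_neg_ne_zero hQ) (by rwa [pval_reflect]),
      ← mul_comp, refl_sR, sL_eq, rootMultiplicity_mul'' hP hQ]
    ring
  · rw [IndMinus_nonneg hlt, IndPlus_nonneg (by rwa [pval_reflect])]

lemma SignAt_reflect (P Q : ℝ[X]) (c : ℝ) :
    SignAt P Q c = SignAt (P.comp (-X)) (Q.comp (-X)) (-c) := by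
  by_cases hP : P = 0
  · rw [SignAt_zero_left hP, SignAt_zero_left (by rw [hP, zero_comp])]
  by_cases hQ : Q = 0
  · rw [SignAt_zero_right hQ, SignAt_zero_right (by rw [hQ, zero_comp])]
  by_cases h0 : pval P Q c = 0
  · rw [SignAt_pos hP hQ h0,
      SignAt_pos (comp_neg_ne_zero hP) (comp_neg_ne_zero hQ) (by rwa [pval_reflect]),
      ← mul_comp, refl_sR, sL_eq, rootMultiplicity_mul'' hP hQ]
    have hev : Even (P.rootMultiplicity c + Q.rootMultiplicity c) := by
      rw [pval_def] at h0
      have hpq : P.rootMultiplicity c = Q.rootMultiplicity c := by omega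
      rw [hpq, ← two_mul]
      exact even_two_mul _
    rw [hev.neg_one_pow, one_mul]
  · rw [SignAt_ne h0, SignAt_ne (by rwa [pval_reflect])]

lemma BadNumber_reflect {P Q R S : ℝ[X]} {c : ℝ}
    (h : BadNumber (P.comp (-X)) (Q.comp (-X)) (R.comp (-X)) (S.comp (-X)) (-c)) :
    BadNumber P Q R S c := by
  obtain ⟨hP, hQ, hR, hS, hB, h1, h2, h3⟩ := h
  have hPc : P ≠ 0 := fun h => hP (by rw [h, zero_comp])
  have hQc : Q ≠ 0 := fun h => hQ (by rw [h, zero_comp])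
  have hRc : R ≠ 0 := fun h => hR (by rw [h, zero_comp])
  have hSc : S ≠ 0 := fun h => hS (by rw [h, zero_comp])
  have hBc : P * S + Q * R ≠ 0 := by
    intro h
    apply hB
    rw [← mul_comp, ← mul_comp, ← add_comp, h, zero_comp]
  rw [pval_reflect, pval_reflect] at h1
  rw [pval_reflect] at h2
  rw [← mul_comp, ← mul_comp, ← mul_comp, ← add_comp, pval_reflect] at h3
  exact ⟨hPc, hQc, hRc, hSc, hBc, h1, h2, h3⟩

lemma locL (P Q R S : ℝ[X]) (c : ℝ) (hPQ : ¬ (P = 0 ∧ Q = 0)) (hRS : ¬ (R = 0 ∧ S = 0))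
    (hc : ¬ BadNumber P Q R S c) :
    IndMinus (P*R - Q*S) (P*S + Q*R) c
      = IndMinus P Q c + IndMinus R S c
        - 1/2 * sL ((P*S + Q*R) * (Q*S)) c + 1/2 * SignAt (P*S + Q*R) (Q*S) c := by
  have hPQ' : ¬ (P.comp (-X) = 0 ∧ Q.comp (-X) = 0) := by
    rintro ⟨h1, h2⟩
    exact hPQ ⟨by rw [← comp_neg_comp_neg P, h1, zero_comp],
      by rw [← comp_neg_comp_neg Q, h2, zero_comp]⟩
  have hRS' : ¬ (R.comp (-X) = 0 ∧ S.comp (-X) = 0) := by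
    rintro ⟨h1, h2⟩
    exact hRS ⟨by rw [← comp_neg_comp_neg R, h1, zero_comp],
      by rw [← comp_neg_comp_neg S, h2, zero_comp]⟩
  have hc' : ¬ BadNumber (P.comp (-X)) (Q.comp (-X)) (R.comp (-X)) (S.comp (-X)) (-c) :=
    fun hb => hc (BadNumber_reflect hb)
  have h := locR (P.comp (-X)) (Q.comp (-X)) (R.comp (-X)) (S.comp (-X)) (-c) hPQ' hRS' hc'
  simp only [← mul_comp, ← add_comp, ← sub_comp] at h
  rw [← IndMinus_reflect, ← IndMinus_reflect, ← IndMinus_reflect, refl_sR, ← SignAt_reflect] at h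
  exact h

/-! ### sign constancy and telescoping -/

lemma eval_sign_const {U : ℝ[X]} {a b : ℝ} (hab : a ≤ b)
    (h : ∀ y ∈ Set.Icc a b, U.eval y ≠ 0) :
    Real.sign (U.eval b) = Real.sign (U.eval a) := by
  have ha := h a ⟨le_refl a, hab⟩
  have hb := h b ⟨hab, le_refl b⟩
  have hcont : ContinuousOn (fun x => U.eval x) (Set.Icc a b) := U.continuous.continuousOn
  rcases lt_or_gt_of_ne ha with h1|h1 <;> rcases lt_or_gt_of_ne hb with h2|h2
  · rw [Real.sign_of_neg h1, Real.sign_of_neg h2]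
  · exfalso
    obtain ⟨y, hy, hy0⟩ := intermediate_value_Icc hab hcont ⟨h1.le, h2.le⟩
    exact h y hy hy0
  · exfalso
    obtain ⟨y, hy, hy0⟩ := intermediate_value_Icc' hab hcont ⟨h2.le, h1.le⟩
    exact h y hy hy0
  · rw [Real.sign_of_pos h1, Real.sign_of_pos h2]

lemma eval_decomp (F : ℝ[X]) (u : ℝ) (y : ℝ) :
    F.eval y = (y - u) ^ (F.rootMultiplicity u) * (pPart F u).eval y := by
  conv_lhs => rw [pPart_spec (F := F) u]
  rw [eval_mul, eval_pow, eval_sub, eval_X, eval_C]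

lemma sign_right {F : ℝ[X]} (hF : F ≠ 0) {u v : ℝ} (huv : u < v)
    (hroots : ∀ x ∈ Set.Ioo u v, ¬ F.IsRoot x) {x : ℝ} (hx : x ∈ Set.Ioo u v) :
    Real.sign (F.eval x) = sR F u := by
  obtain ⟨hx1, hx2⟩ := hx
  rw [eval_decomp F u x, rsign_mul, Real.sign_of_pos (pow_pos (by linarith) _), one_mul, sR_def]
  apply eval_sign_const (le_of_lt hx1)
  intro y hy
  obtain ⟨hy1, hy2⟩ := hy
  rcases eq_or_lt_of_le hy1 with rfl|hy1
  · exact pPart_eval_ne_zero hF u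
  · have hFy : F.eval y ≠ 0 := hroots y ⟨hy1, lt_of_le_of_lt hy2 hx2⟩
    rw [eval_decomp F u y] at hFy
    exact fun h0 => hFy (by rw [h0, mul_zero])

lemma sign_left {F : ℝ[X]} (hF : F ≠ 0) {u v : ℝ} (huv : u < v)
    (hroots : ∀ x ∈ Set.Ioo u v, ¬ F.IsRoot x) {x : ℝ} (hx : x ∈ Set.Ioo u v) :
    Real.sign (F.eval x) = sL F v := by
  obtain ⟨hx1, hx2⟩ := hx
  have hpow : ((x - v : ℝ)) ^ (F.rootMultiplicity v) =
      (-1:ℝ) ^ (F.rootMultiplicity v) * (v - x) ^ (F.rootMultiplicity v) := by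
    rw [← neg_pow]; ring_nf
  rw [eval_decomp F v x, hpow, mul_assoc, rsign_mul, rsign_mul, rsign_neg_one_pow,
    Real.sign_of_pos (pow_pos (by linarith) _), one_mul, sL_eq, sR_def]
  congr 1
  symm
  apply eval_sign_const (le_of_lt hx2)
  intro y hy
  obtain ⟨hy1, hy2⟩ := hy
  rcases eq_or_lt_of_le hy2 with rfl|hy2
  · exact pPart_eval_ne_zero hF y
  · have hFy : F.eval y ≠ 0 := hroots y ⟨lt_of_lt_of_le hx1 hy1, hy2⟩
    rw [eval_decomp F v y] at hFy
    exact fun h0 => hFy (by rw [h0, mul_zero])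

lemma sRa_eq_sLb {G : ℝ[X]} (hG : G ≠ 0) {a b : ℝ} (hab : a < b)
    (h : ∀ x ∈ Set.Ioo a b, ¬ G.IsRoot x) : sR G a = sL G b := by
  have hm : (a+b)/2 ∈ Set.Ioo a b := ⟨by linarith, by linarith⟩
  rw [← sign_right hG hab h hm, sign_left hG hab h hm]

noncomputable def rootsIn (G : ℝ[X]) (a b : ℝ) : Finset ℝ :=
  G.roots.toFinset.filter (fun x => a < x ∧ x < b)

lemma mem_rootsIn {G : ℝ[X]} (hG : G ≠ 0) {a b x : ℝ} :
    x ∈ rootsIn G a b ↔ G.IsRoot x ∧ a < x ∧ x < b := by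
  rw [rootsIn, Finset.mem_filter, Multiset.mem_toFinset, mem_roots']
  tauto

lemma telescope_empty {G : ℝ[X]} (hG : G ≠ 0) {a b : ℝ} (hab : a < b)
    (hempty : rootsIn G a b = ∅) :
    ∑ x ∈ rootsIn G a b, (sR G x - sL G x) = sL G b - sR G a := by
  rw [hempty, Finset.sum_empty]
  have h : ∀ x ∈ Set.Ioo a b, ¬ G.IsRoot x := by
    intro x hx hroot
    have : x ∈ rootsIn G a b := (mem_rootsIn hG).2 ⟨hroot, hx.1, hx.2⟩
    rw [hempty] at this
    exact absurd this (Finset.notMem_empty x)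
  rw [← sRa_eq_sLb hG hab h, sub_self]

lemma telescope_finset (G : ℝ[X]) (hG : G ≠ 0) :
    ∀ (n : ℕ) (a b : ℝ), a < b → (rootsIn G a b).card ≤ n →
      ∑ x ∈ rootsIn G a b, (sR G x - sL G x) = sL G b - sR G a := by
  intro n
  induction n with
  | zero =>
    intro a b hab hcard
    exact telescope_empty hG hab (Finset.card_eq_zero.1 (Nat.le_zero.1 hcard))
  | succ n ih =>
    intro a b hab hcard
    rcases Finset.eq_empty_or_nonempty (rootsIn G a b) with hempty|hne
    · exact telescope_empty hG hab hempty
    · set c := (rootsIn G a b).min' hne with hcdef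
      have hc := (rootsIn G a b).min'_mem hne
      obtain ⟨hcroot, hac, hcb⟩ := (mem_rootsIn hG).1 hc
      have hsplit : rootsIn G a b = insert c (rootsIn G c b) := by
        ext x
        rw [Finset.mem_insert, mem_rootsIn hG, mem_rootsIn hG]
        constructor
        · rintro ⟨hroot, h1, h2⟩
          rcases eq_or_ne x c with h|h
          · exact Or.inl h
          · refine Or.inr ⟨hroot, ?_, h2⟩
            have := (rootsIn G a b).min'_le x ((mem_rootsIn hG).2 ⟨hroot, h1, h2⟩)
            rcases lt_or_eq_of_le this with h'|h'
            · exact h'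
            · exact absurd h'.symm h
        · rintro (rfl|⟨hroot, h1, h2⟩)
          · exact ⟨hcroot, hac, hcb⟩
          · exact ⟨hroot, lt_trans hac h1, h2⟩
      have hnotmem : c ∉ rootsIn G c b := by
        intro h
        exact absurd ((mem_rootsIn hG).1 h).2.1 (lt_irrefl c)
      have hcard2 : (rootsIn G c b).card ≤ n := by
        have := hsplit ▸ hcard
        rw [Finset.card_insert_of_notMem hnotmem] at this
        omega
      have hlink : sR G a = sL G c := by
        apply sRa_eq_sLb hG hac
        intro x hx hroot
        have hmem := (mem_rootsIn hG).2 ⟨hroot, hx.1, lt_trans hx.2 hcb⟩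
        have := (rootsIn G a b).min'_le x hmem
        exact absurd this (not_le.2 hx.2)
      rw [hsplit, Finset.sum_insert hnotmem, ih c b hcb hcard2, hlink]
      ring

lemma finsum_Ioo_eq' {G : ℝ[X]} (hG : G ≠ 0) (h : ℝ → ℝ)
    (hsupp : ∀ x, ¬ G.IsRoot x → h x = 0) (a b : ℝ) :
    ∑ᶠ x ∈ Set.Ioo a b, h x = ∑ x ∈ rootsIn G a b, h x := by
  apply finsum_mem_eq_sum_of_inter_support_eq
  ext x
  simp only [Set.mem_inter_iff, Set.mem_Ioo, Function.mem_support, Finset.coe_sort_coe,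
    Finset.mem_coe, mem_rootsIn hG]
  constructor
  · rintro ⟨⟨h1, h2⟩, h3⟩
    have hroot : G.IsRoot x := by
      by_contra hr
      exact h3 (hsupp x hr)
    exact ⟨⟨hroot, h1, h2⟩, h3⟩
  · rintro ⟨⟨_, h1, h2⟩, h3⟩
    exact ⟨⟨h1, h2⟩, h3⟩

lemma sR_sub_sL_eq_zero {G : ℝ[X]} {x : ℝ} (h : ¬ G.IsRoot x) : sR G x - sL G x = 0 := by
  rw [sL_eq, rootMultiplicity_eq_zero h, pow_zero, one_mul, sub_self]

lemma telescope_scaled (G : ℝ[X]) (coef : ℝ) {a b : ℝ} (hab : a < b) :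
    ∑ᶠ x ∈ Set.Ioo a b, (coef * (sR G x - sL G x)) = coef * (sL G b - sR G a) := by
  by_cases hG : G = 0
  · subst hG
    have hz : Set.EqOn (fun x => coef * (sR 0 x - sL 0 x)) (0 : ℝ → ℝ) (Set.Ioo a b) := by
      intro x _
      show coef * (sR 0 x - sL 0 x) = 0
      rw [sR_zero, sL_zero, sub_self, mul_zero]
    rw [finsum_mem_of_eqOn_zero hz, sR_zero, sL_zero, sub_self, mul_zero]
  · rw [finsum_Ioo_eq' hG _ (fun x hx => by rw [sR_sub_sL_eq_zero hx, mul_zero]) a b,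
      ← Finset.mul_sum, telescope_finset G hG (rootsIn G a b).card a b hab le_rfl]

/-! ### support lemmas -/

lemma IndAt_support (P Q : ℝ[X]) : (Function.support fun x => IndAt P Q x).Finite := by
  by_cases hQ : Q = 0
  · convert Set.finite_empty
    ext x
    simp only [Function.mem_support, Set.mem_empty_iff_false, iff_false, not_not]
    rw [IndAt, IndPlus_zero_right hQ, IndMinus_zero_right hQ, sub_self]
  · apply Set.Finite.subset (finite_setOf_isRoot hQ)
    intro x hx
    simp only [Function.mem_support] at hx
    by_contra hroot
    apply hx
    have hp : ¬ pval P Q x < 0 := by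
      rw [pval_def, rootMultiplicity_eq_zero hroot]
      omega
    rw [IndAt, IndPlus_nonneg hp, IndMinus_nonneg hp, sub_self]

lemma sR_sub_sL_support (G : ℝ[X]) (coef : ℝ) :
    (Function.support fun x => coef * (sR G x - sL G x)).Finite := by
  by_cases hG : G = 0
  · convert Set.finite_empty
    ext x
    simp only [Function.mem_support, Set.mem_empty_iff_false, iff_false, not_not]
    rw [hG, sR_zero, sL_zero, sub_self, mul_zero]
  · apply Set.Finite.subset (finite_setOf_isRoot hG)
    intro x hx
    simp only [Function.mem_support] at hx
    by_contra hroot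
    exact hx (by rw [sR_sub_sL_eq_zero hroot, mul_zero])

lemma locI (P Q R S : ℝ[X]) (c : ℝ) (hPQ : ¬ (P = 0 ∧ Q = 0)) (hRS : ¬ (R = 0 ∧ S = 0)) :
    IndAt (P*R - Q*S) (P*S + Q*R) c
      = IndAt P Q c + IndAt R S c
        - 1/2 * (sR ((P*S + Q*R) * (Q*S)) c - sL ((P*S + Q*R) * (Q*S)) c) := by
  by_cases hc : BadNumber P Q R S c
  · obtain ⟨hP, hQ, hR, hS, hB, h1, h2, h3⟩ := hc
    have hQS : Q*S ≠ 0 := mul_ne_zero hQ hS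
    have hPR : P*R ≠ 0 := mul_ne_zero hP hR
    have hPS : P*S ≠ 0 := mul_ne_zero hP hS
    have hQR : Q*R ≠ 0 := mul_ne_zero hQ hR
    have hNQS : -(Q*S) ≠ 0 := neg_ne_zero.2 hQS
    have hmPR := rootMultiplicity_mul'' hP hR c
    have hmPS := rootMultiplicity_mul'' hP hS c
    have hmQR := rootMultiplicity_mul'' hQ hR c
    have hmQS := rootMultiplicity_mul'' hQ hS c
    have hmNQS : (-(Q*S)).rootMultiplicity c
        = Q.rootMultiplicity c + S.rootMultiplicity c := by
      rw [rootMultiplicity_neg, hmQS]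
    rw [pval_def, pval_def] at h1
    rw [pval_def] at h2
    rw [pval_def, hmQS] at h3
    have hb : (P*S+Q*R).rootMultiplicity c
        = Q.rootMultiplicity c + S.rootMultiplicity c := by omega
    have hAeq2 : P*R - Q*S = P*R + -(Q*S) := by ring
    obtain ⟨hA1, hA2, hA3⟩ := sum_dom hPR hNQS (by rw [hmPR, hmNQS]; omega)
    have hA1' : P*R - Q*S ≠ 0 := by rw [hAeq2]; exact hA1
    have hA2' : (P*R - Q*S).rootMultiplicity c
        = P.rootMultiplicity c + R.rootMultiplicity c := by rw [hAeq2, hA2, hmPR]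
    have sqQ := sR_sq hQ c
    have sqS := sR_sq hS c
    have hcanc := sum_cancel hPS hQR (by rw [hmPS, hmQR]; omega)
      (Or.inr (by rw [hmPS]; omega))
    have hrel : sR (Q*R) c = - sR (P*S) c := sR_of_cancel hcanc
    rw [sR_mul, sR_mul] at hrel
    have heq2 : sR P c * sR S c + sR Q c * sR R c = 0 := by linarith [hrel]
    have hrelsum : sR (P*Q) c + sR (R*S) c = 0 := by
      rw [sR_mul, sR_mul]
      linear_combination (sR Q c * sR S c) * heq2 - (sR R c * sR S c) * sqQ
        - (sR P c * sR Q c) * sqS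
    rw [IndAt, IndAt, IndAt,
       IndPlus_pos hA1' hB (by rw [pval_def, hA2', hb]; omega),
       IndMinus_pos hA1' hB (by rw [pval_def, hA2', hb]; omega),
       IndPlus_pos hP hQ (by rw [pval_def]; omega),
       IndMinus_pos hP hQ (by rw [pval_def]; omega),
       IndPlus_pos hR hS (by rw [pval_def]; omega),
       IndMinus_pos hR hS (by rw [pval_def]; omega),
       sL_eq]
    have hevenAB : Even ((P*R - Q*S).rootMultiplicity c
        + (P*S+Q*R).rootMultiplicity c) := by
      rw [hA2', hb, Nat.even_iff]
      omega
    have hevenBQS : Even (((P*S+Q*R) * (Q*S)).rootMultiplicity c) := by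
      rw [rootMultiplicity_mul'' hB hQS, hb, hmQS, ← two_mul]
      exact even_two_mul _
    have hparity : ((-1:ℝ)) ^ (R.rootMultiplicity c + S.rootMultiplicity c)
        = (-1:ℝ) ^ (P.rootMultiplicity c + Q.rootMultiplicity c) := by
      rcases Nat.even_or_odd (P.rootMultiplicity c + Q.rootMultiplicity c) with h|h
      · have h' : Even (R.rootMultiplicity c + S.rootMultiplicity c) := by
          rw [Nat.even_iff] at h ⊢; omega
        rw [h.neg_one_pow, h'.neg_one_pow]
      · have h' : Odd (R.rootMultiplicity c + S.rootMultiplicity c) := by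
          rw [Nat.odd_iff] at h ⊢; omega
        rw [h.neg_one_pow, h'.neg_one_pow]
    rw [hevenAB.neg_one_pow, hevenBQS.neg_one_pow, hparity]
    linear_combination (-(1 - (-1:ℝ)^(P.rootMultiplicity c + Q.rootMultiplicity c))/2) * hrelsum
  · rw [IndAt, IndAt, IndAt, locR P Q R S c hPQ hRS hc, locL P Q R S c hPQ hRS hc]
    ring

-- MORE HERE

theorem stmt13 (P Q R S : ℝ[X]) (hPQ : ¬ (P = 0 ∧ Q = 0)) (hRS : ¬ (R = 0 ∧ S = 0))
    (a b : ℝ) (hab : a < b)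
    (ha : ¬ BadNumber P Q R S a) (hb : ¬ BadNumber P Q R S b) :
    Ind (P * R - Q * S) (P * S + Q * R) a b =
      Ind P Q a b + Ind R S a b - Var (P * S + Q * R) (Q * S) a b := by
  have hRa := locR P Q R S a hPQ hRS ha
  have hLb := locL P Q R S b hPQ hRS hb
  simp only [Ind]
  rw [if_pos hab, if_pos hab, if_pos hab]
  rw [IndSeg, IndSeg, IndSeg, Var]
  have hsupp3 : (Function.support fun x => IndAt R S x
      + (-(1/2)) * (sR ((P*S+Q*R) * (Q*S)) x - sL ((P*S+Q*R) * (Q*S)) x)).Finite := by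
    apply Set.Finite.subset ((IndAt_support R S).union
      (sR_sub_sL_support ((P*S+Q*R) * (Q*S)) (-(1/2))))
    intro x hx
    simp only [Function.mem_support] at hx
    by_contra h'
    simp only [Set.mem_union, Function.mem_support, not_or, not_not] at h'
    exact hx (by rw [h'.1, h'.2, add_zero])
  have hcong : ∑ᶠ x ∈ Set.Ioo a b, IndAt (P*R - Q*S) (P*S + Q*R) x
      = ∑ᶠ x ∈ Set.Ioo a b, (IndAt P Q x + (IndAt R S x
        + (-(1/2)) * (sR ((P*S+Q*R) * (Q*S)) x - sL ((P*S+Q*R) * (Q*S)) x))) := by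
    apply finsum_mem_congr rfl
    intro x _
    rw [locI P Q R S x hPQ hRS]
    ring
  rw [hcong,
    finsum_mem_add_distrib' (Set.Finite.inter_of_right (IndAt_support P Q) _)
      (Set.Finite.inter_of_right hsupp3 _),
    finsum_mem_add_distrib' (Set.Finite.inter_of_right (IndAt_support R S) _)
      (Set.Finite.inter_of_right (sR_sub_sL_support ((P*S+Q*R) * (Q*S)) (-(1/2))) _),
    telescope_scaled ((P*S+Q*R) * (Q*S)) (-(1/2)) hab]
  linarith [hRa, hLb]
end

section
/- For F(Z) = Z − z0 with z0 ∈ ℂ and any rectangle Γ = [x0,x1]×[y0,y1] ⊂ ℝ², the winding number W(F | ∂Γ) := (1/2)(w(F | ∂Γ) + w(iF | ∂Γ)) equals 1 if z0 is interior to Γ, 1/2 if z0 lies on an edge (but not a vertex) of Γ, 1/4 if z0 is a vertex of Γ, and 0 if z0 is exterior to Γ. -/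
open Polynomial

open Polynomial

noncomputable def rePoly (p : ℂ[X]) : ℝ[X] :=
  ∑ n ∈ p.support, C (p.coeff n).re * X ^ n

noncomputable def imPoly (p : ℂ[X]) : ℝ[X] :=
  ∑ n ∈ p.support, C (p.coeff n).im * X ^ n

noncomputable def conjP (p : ℂ[X]) : ℂ[X] := p.map (starRingEnd ℂ)

noncomputable def restrictH (F : ℂ[X]) (y : ℝ) : ℂ[X] :=
  F.comp (X + C (Complex.I * (y : ℂ)))

noncomputable def restrictV (F : ℂ[X]) (x : ℝ) : ℂ[X] :=
  F.comp (C (x : ℂ) + C Complex.I * X)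

noncomputable def restrictHc (G : ℂ[X]) (y : ℝ) : ℂ[X] := conjP (restrictH G y)

noncomputable def restrictVc (G : ℂ[X]) (x : ℝ) : ℂ[X] := conjP (restrictV G x)

noncomputable def lineInd (p : ℂ[X]) (a b : ℝ) : ℝ := Ind (rePoly p) (imPoly p) a b

noncomputable def wind (F G : ℂ[X]) (x0 x1 y0 y1 : ℝ) : ℝ :=
  (1/2) * (lineInd (restrictH F y0 * restrictHc G y0) x0 x1
    + lineInd (restrictV F x1 * restrictVc G x1) y0 y1
    + lineInd (restrictH F y1 * restrictHc G y1) x1 x0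
    + lineInd (restrictV F x0 * restrictVc G x0) y1 y0)

noncomputable def Wind (F G : ℂ[X]) (x0 x1 y0 y1 : ℝ) : ℝ :=
  (1/2) * (wind F G x0 x1 y0 y1 + wind (C Complex.I * F) G x0 x1 y0 y1)


lemma coeff_rePoly (p : ℂ[X]) (n : ℕ) : (rePoly p).coeff n = (p.coeff n).re := by
  rw [rePoly, finset_sum_coeff]
  simp only [C_mul_X_pow_eq_monomial, coeff_monomial]
  rw [Finset.sum_ite_eq' p.support n]
  split_ifs with h
  · rfl
  · rw [notMem_support_iff.mp h]; simp

lemma coeff_imPoly (p : ℂ[X]) (n : ℕ) : (imPoly p).coeff n = (p.coeff n).im := by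
  rw [imPoly, finset_sum_coeff]
  simp only [C_mul_X_pow_eq_monomial, coeff_monomial]
  rw [Finset.sum_ite_eq' p.support n]
  split_ifs with h
  · rfl
  · rw [notMem_support_iff.mp h]; simp

lemma rePoly_linear (u v : ℂ) : rePoly (C u * X + C v) = C u.re * X + C v.re := by
  ext n
  rw [coeff_rePoly]
  simp only [coeff_add, coeff_C_mul, coeff_X, coeff_C, mul_ite, mul_one, mul_zero]
  split_ifs <;> simp

lemma imPoly_linear (u v : ℂ) : imPoly (C u * X + C v) = C u.im * X + C v.im := by
  ext n
  rw [coeff_imPoly]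
  simp only [coeff_add, coeff_C_mul, coeff_X, coeff_C, mul_ite, mul_one, mul_zero]
  split_ifs <;> simp

lemma sign_neg' (r : ℝ) : Real.sign (-r) = -Real.sign r := by
  rcases lt_trichotomy r 0 with h|h|h
  · rw [Real.sign_of_neg h, Real.sign_of_pos (by linarith)]; ring
  · simp [h]
  · rw [Real.sign_of_pos h, Real.sign_of_neg (by linarith)]

lemma indPlus_const_right (P : ℝ[X]) (d x : ℝ) : IndPlus P (C d) x = 0 := by
  rw [IndPlus, if_neg]
  rintro ⟨-, -, hlt⟩
  rw [pval, rootMultiplicity_C] at hlt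
  omega

lemma indMinus_const_right (P : ℝ[X]) (d x : ℝ) : IndMinus P (C d) x = 0 := by
  rw [IndMinus, if_neg]
  rintro ⟨-, -, hlt⟩
  rw [pval, rootMultiplicity_C] at hlt
  omega

lemma ind_const_right (P : ℝ[X]) (d a b : ℝ) : Ind P (C d) a b = 0 := by
  have hseg : ∀ u v : ℝ, IndSeg P (C d) u v = 0 := by
    intro u v
    rw [IndSeg, indPlus_const_right, indMinus_const_right]
    have : ∀ x ∈ Set.Ioo u v, IndAt P (C d) x = 0 := by
      intro x _
      rw [IndAt, indPlus_const_right, indMinus_const_right, sub_zero]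
    rw [finsum_mem_congr rfl this]
    simp
  rw [Ind]
  split_ifs <;> simp [hseg]

lemma pPart_const (d x : ℝ) : pPart (C d) x = C d := by
  rw [pPart, rootMultiplicity_C, pow_zero, divByMonic_one]

lemma pPart_lin_self (c : ℝ) : pPart (X - C c) c = 1 := by
  rw [pPart, rootMultiplicity_X_sub_C_self, pow_one]
  have := mul_divByMonic_cancel_left (1:ℝ[X]) (monic_X_sub_C c)
  rwa [mul_one] at this

lemma pval_const_lin (d c x : ℝ) : pval (C d) (X - C c) x = if x = c then -1 else 0 := by
  rw [pval, rootMultiplicity_C, rootMultiplicity_X_sub_C]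
  split_ifs <;> simp

lemma indPlus_const_lin (d c x : ℝ) (hd : d ≠ 0) :
    IndPlus (C d) (X - C c) x = if x = c then (1/2) * Real.sign d else 0 := by
  by_cases hx : x = c
  · subst hx
    have hcond : (C d : ℝ[X]) ≠ 0 ∧ (X - C x : ℝ[X]) ≠ 0 ∧ pval (C d) (X - C x) x < 0 :=
      ⟨by simp [hd], X_sub_C_ne_zero x, by rw [pval_const_lin, if_pos rfl]; norm_num⟩
    rw [IndPlus, if_pos hcond, pPart_const, pPart_lin_self, if_pos rfl]
    simp
  · rw [IndPlus, if_neg, if_neg hx]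
    rintro ⟨-, -, hlt⟩
    rw [pval_const_lin, if_neg hx] at hlt
    omega

lemma indMinus_const_lin (d c x : ℝ) (hd : d ≠ 0) :
    IndMinus (C d) (X - C c) x = if x = c then -((1/2) * Real.sign d) else 0 := by
  by_cases hx : x = c
  · subst hx
    have hcond : (C d : ℝ[X]) ≠ 0 ∧ (X - C x : ℝ[X]) ≠ 0 ∧ pval (C d) (X - C x) x < 0 :=
      ⟨by simp [hd], X_sub_C_ne_zero x, by rw [pval_const_lin, if_pos rfl]; norm_num⟩
    rw [IndMinus, if_pos hcond, pPart_const, pPart_lin_self, pval_const_lin, if_pos rfl,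
      if_pos rfl]
    norm_num
  · rw [IndMinus, if_neg, if_neg hx]
    rintro ⟨-, -, hlt⟩
    rw [pval_const_lin, if_neg hx] at hlt
    omega

lemma indSeg_const_lin (d c a b : ℝ) (hab : a < b) :
    IndSeg (C d) (X - C c) a b
      = Real.sign d * (Real.sign (b - c) + Real.sign (c - a)) / 2 := by
  by_cases hd : d = 0
  · subst hd
    have hP : (C (0:ℝ)) = 0 := by simp
    have h1 : ∀ x, IndPlus (C (0:ℝ)) (X - C c) x = 0 := by
      intro x; rw [IndPlus, if_neg]; rintro ⟨h, -⟩; exact h hP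
    have h2 : ∀ x, IndMinus (C (0:ℝ)) (X - C c) x = 0 := by
      intro x; rw [IndMinus, if_neg]; rintro ⟨h, -⟩; exact h hP
    rw [IndSeg, h1, h2]
    have : ∀ x ∈ Set.Ioo a b, IndAt (C (0:ℝ)) (X - C c) x = 0 := by
      intro x _; rw [IndAt, h1, h2, sub_zero]
    rw [finsum_mem_congr rfl this]
    simp
  · have hAt : ∀ x, IndAt (C d) (X - C c) x = if x = c then Real.sign d else 0 := by
      intro x
      rw [IndAt, indPlus_const_lin d c x hd, indMinus_const_lin d c x hd]
      split_ifs <;> ring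
    have hsum : (∑ᶠ x ∈ Set.Ioo a b, IndAt (C d) (X - C c) x)
        = if c ∈ Set.Ioo a b then Real.sign d else 0 := by
      rw [finsum_mem_def, finsum_eq_single _ c]
      · rw [Set.indicator_apply]
        split_ifs with h1 <;> simp [hAt]
      · intro x hx
        rw [Set.indicator_apply]
        split_ifs with h1
        · rw [hAt, if_neg hx]
        · rfl
    rw [IndSeg, hsum, indPlus_const_lin d c a hd, indMinus_const_lin d c b hd]
    rcases lt_trichotomy a c with h1|h1|h1 <;> rcases lt_trichotomy c b with h2|h2|h2
    · rw [if_neg (ne_of_lt h1), if_pos (Set.mem_Ioo.mpr ⟨h1, h2⟩), if_neg (ne_of_gt h2),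
        Real.sign_of_pos (by linarith : (0:ℝ) < b - c),
        Real.sign_of_pos (by linarith : (0:ℝ) < c - a)]
      ring
    · rw [if_neg (ne_of_lt h1), if_neg (by simp [Set.mem_Ioo]; intro; linarith),
        if_pos h2.symm, h2, sub_self, Real.sign_zero,
        Real.sign_of_pos (by linarith : (0:ℝ) < b - a)]
      ring
    · rw [if_neg (ne_of_lt h1), if_neg (by simp [Set.mem_Ioo]; intro; linarith),
        if_neg (by intro h; rw [h] at h2; linarith),
        Real.sign_of_neg (by linarith : b - c < 0),
        Real.sign_of_pos (by linarith : (0:ℝ) < c - a)]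
      ring
    · rw [if_pos h1, if_neg (by simp [Set.mem_Ioo]; intro; linarith),
        if_neg (ne_of_gt h2), h1, sub_self, Real.sign_zero,
        Real.sign_of_pos (by linarith : (0:ℝ) < b - c)]
      ring
    · exfalso; rw [h1, h2] at hab; exact lt_irrefl b hab
    · exfalso; linarith [h1 ▸ hab]
    · rw [if_neg (ne_of_gt h1), if_neg (by simp [Set.mem_Ioo]; intro; linarith),
        if_neg (ne_of_gt h2),
        Real.sign_of_pos (by linarith : (0:ℝ) < b - c),
        Real.sign_of_neg (by linarith : c - a < 0)]
      ring
    · exfalso; linarith [h2 ▸ h1]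
    · exfalso; linarith

lemma restrict_P1 (z0 : ℂ) (y : ℝ) :
    restrictH (X - C z0) y * restrictHc 1 y = C 1 * X + C (Complex.I * y - z0) := by
  simp [restrictH, restrictHc, conjP, sub_comp, X_comp, C_comp, one_comp, Polynomial.map_one]
  ring

lemma restrict_P2 (z0 : ℂ) (x : ℝ) :
    restrictV (X - C z0) x * restrictVc 1 x = C Complex.I * X + C ((x:ℂ) - z0) := by
  simp [restrictV, restrictVc, conjP, sub_comp, X_comp, C_comp, one_comp, add_comp, mul_comp,
    Polynomial.map_one]
  ring

lemma restrict_P3 (z0 : ℂ) (y : ℝ) :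
    restrictH (C Complex.I * (X - C z0)) y * restrictHc 1 y
      = C Complex.I * X + C (Complex.I * (Complex.I * y - z0)) := by
  simp [restrictH, restrictHc, conjP, sub_comp, X_comp, C_comp, one_comp, mul_comp,
    Polynomial.map_one]
  ring

lemma restrict_P4 (z0 : ℂ) (x : ℝ) :
    restrictV (C Complex.I * (X - C z0)) x * restrictVc 1 x
      = C (-1 : ℂ) * X + C (Complex.I * ((x:ℂ) - z0)) := by
  have hI : (C (-1:ℂ) : ℂ[X]) = C Complex.I * C Complex.I := by
    rw [← C_mul, Complex.I_mul_I]
  simp [restrictV, restrictVc, conjP, sub_comp, X_comp, C_comp, one_comp, add_comp, mul_comp,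
    Polynomial.map_one, hI]
  ring

lemma lin_norm (e : ℝ) : C (1:ℝ) * X + C e = X - C (-e) := by
  rw [map_neg, sub_neg_eq_add, map_one, one_mul]

lemma lineInd_P1 (z0 : ℂ) (y a b : ℝ) :
    lineInd (restrictH (X - C z0) y * restrictHc 1 y) a b = 0 := by
  rw [lineInd, restrict_P1, imPoly_linear]
  simp only [Complex.one_im, map_zero, zero_mul, zero_add]
  exact ind_const_right _ _ a b

lemma lineInd_P4 (z0 : ℂ) (x a b : ℝ) :
    lineInd (restrictV (C Complex.I * (X - C z0)) x * restrictVc 1 x) a b = 0 := by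
  rw [lineInd, restrict_P4, imPoly_linear]
  simp only [Complex.neg_im, Complex.one_im, neg_zero, map_zero, zero_mul, zero_add]
  exact ind_const_right _ _ a b

lemma lineInd_P2 (z0 : ℂ) (x a b : ℝ) (hab : a < b) :
    lineInd (restrictV (X - C z0) x * restrictVc 1 x) a b
      = Real.sign (x - z0.re) * (Real.sign (b - z0.im) + Real.sign (z0.im - a)) / 2 := by
  rw [lineInd, restrict_P2, rePoly_linear, imPoly_linear]
  have h1 : (Complex.I.re : ℝ) = 0 := Complex.I_re
  have h2 : (Complex.I.im : ℝ) = 1 := Complex.I_im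
  have h3 : ((x:ℂ) - z0).re = x - z0.re := by simp
  have h4 : ((x:ℂ) - z0).im = -z0.im := by simp
  rw [h1, h2, h3, h4, map_zero, zero_mul, zero_add, lin_norm, neg_neg, Ind, if_pos hab]
  exact indSeg_const_lin _ _ a b hab

lemma lineInd_P3 (z0 : ℂ) (y a b : ℝ) (hab : a < b) :
    lineInd (restrictH (C Complex.I * (X - C z0)) y * restrictHc 1 y) a b
      = Real.sign (z0.im - y) * (Real.sign (b - z0.re) + Real.sign (z0.re - a)) / 2 := by
  rw [lineInd, restrict_P3, rePoly_linear, imPoly_linear]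
  have h1 : (Complex.I.re : ℝ) = 0 := Complex.I_re
  have h2 : (Complex.I.im : ℝ) = 1 := Complex.I_im
  have h3 : (Complex.I * (Complex.I * y - z0)).re = z0.im - y := by simp
  have h4 : (Complex.I * (Complex.I * y - z0)).im = -z0.re := by simp
  rw [h1, h2, h3, h4, map_zero, zero_mul, zero_add, lin_norm, neg_neg, Ind, if_pos hab]
  exact indSeg_const_lin _ _ a b hab

lemma lineInd_swap (p : ℂ[X]) (a b : ℝ) (hab : a < b) :
    lineInd p b a = - lineInd p a b := by
  rw [lineInd, lineInd, Ind, Ind, if_neg (lt_asymm hab), if_pos hab, if_pos hab]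

lemma wind_key (z0 : ℂ) (x0 x1 y0 y1 : ℝ) (hx : x0 < x1) (hy : y0 < y1) :
    Wind (X - C z0) 1 x0 x1 y0 y1
      = (Real.sign (x1 - z0.re) + Real.sign (z0.re - x0))
        * (Real.sign (y1 - z0.im) + Real.sign (z0.im - y0)) / 4 := by
  rw [Wind, wind, wind, lineInd_P1, lineInd_swap _ _ _ hx, lineInd_P1,
    lineInd_swap _ _ _ hy, lineInd_P2 _ _ _ _ hy, lineInd_P2 _ _ _ _ hy,
    lineInd_swap _ _ _ hx, lineInd_P3 _ _ _ _ hx, lineInd_P3 _ _ _ _ hx,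
    lineInd_swap _ _ _ hy, lineInd_P4, lineInd_P4]
  have e1 : Real.sign (x0 - z0.re) = - Real.sign (z0.re - x0) := by
    rw [← neg_sub, sign_neg']
  have e2 : Real.sign (z0.im - y1) = - Real.sign (y1 - z0.im) := by
    rw [← neg_sub, sign_neg']
  rw [e1, e2]
  ring
theorem stmt17 (z0 : ℂ) (x0 x1 y0 y1 : ℝ) (hx : x0 < x1) (hy : y0 < y1) :
    (x0 < z0.re ∧ z0.re < x1 ∧ y0 < z0.im ∧ z0.im < y1 →
      Wind (X - C z0) 1 x0 x1 y0 y1 = 1) ∧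
    ((x0 ≤ z0.re ∧ z0.re ≤ x1 ∧ y0 ≤ z0.im ∧ z0.im ≤ y1) ∧
      (z0.re = x0 ∨ z0.re = x1 ∨ z0.im = y0 ∨ z0.im = y1) ∧
      ¬ ((z0.re = x0 ∨ z0.re = x1) ∧ (z0.im = y0 ∨ z0.im = y1)) →
      Wind (X - C z0) 1 x0 x1 y0 y1 = 1/2) ∧
    ((z0.re = x0 ∨ z0.re = x1) ∧ (z0.im = y0 ∨ z0.im = y1) →
      Wind (X - C z0) 1 x0 x1 y0 y1 = 1/4) ∧
    (¬ (x0 ≤ z0.re ∧ z0.re ≤ x1 ∧ y0 ≤ z0.im ∧ z0.im ≤ y1) →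
      Wind (X - C z0) 1 x0 x1 y0 y1 = 0) := by 
  rw [wind_key z0 x0 x1 y0 y1 hx hy]
  refine ⟨?_, ?_, ?_, ?_⟩
  · rintro ⟨h1, h2, h3, h4⟩
    rw [Real.sign_of_pos (by linarith : (0:ℝ) < x1 - z0.re),
      Real.sign_of_pos (by linarith : (0:ℝ) < z0.re - x0),
      Real.sign_of_pos (by linarith : (0:ℝ) < y1 - z0.im),
      Real.sign_of_pos (by linarith : (0:ℝ) < z0.im - y0)]
    norm_num
  · rintro ⟨⟨ha0, ha1, hb0, hb1⟩, hedge, hnv⟩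
    rcases hedge with h|h|h|h
    · have hb0' : y0 < z0.im := lt_of_le_of_ne hb0 (fun hb => hnv ⟨Or.inl h, Or.inl hb.symm⟩)
      have hb1' : z0.im < y1 := lt_of_le_of_ne hb1 (fun hb => hnv ⟨Or.inl h, Or.inr hb⟩)
      rw [h, Real.sign_of_pos (by linarith : (0:ℝ) < x1 - x0), sub_self, Real.sign_zero,
        Real.sign_of_pos (by linarith : (0:ℝ) < y1 - z0.im),
        Real.sign_of_pos (by linarith : (0:ℝ) < z0.im - y0)]
      norm_num
    · have hb0' : y0 < z0.im := lt_of_le_of_ne hb0 (fun hb => hnv ⟨Or.inr h, Or.inl hb.symm⟩)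
      have hb1' : z0.im < y1 := lt_of_le_of_ne hb1 (fun hb => hnv ⟨Or.inr h, Or.inr hb⟩)
      rw [h, sub_self, Real.sign_zero, Real.sign_of_pos (by linarith : (0:ℝ) < x1 - x0),
        Real.sign_of_pos (by linarith : (0:ℝ) < y1 - z0.im),
        Real.sign_of_pos (by linarith : (0:ℝ) < z0.im - y0)]
      norm_num
    · have ha0' : x0 < z0.re := lt_of_le_of_ne ha0 (fun ha => hnv ⟨Or.inl ha.symm, Or.inl h⟩)
      have ha1' : z0.re < x1 := lt_of_le_of_ne ha1 (fun ha => hnv ⟨Or.inr ha, Or.inl h⟩)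
      rw [h, sub_self, Real.sign_zero, Real.sign_of_pos (by linarith : (0:ℝ) < x1 - z0.re),
        Real.sign_of_pos (by linarith : (0:ℝ) < z0.re - x0),
        Real.sign_of_pos (by linarith : (0:ℝ) < y1 - y0)]
      norm_num
    · have ha0' : x0 < z0.re := lt_of_le_of_ne ha0 (fun ha => hnv ⟨Or.inl ha.symm, Or.inr h⟩)
      have ha1' : z0.re < x1 := lt_of_le_of_ne ha1 (fun ha => hnv ⟨Or.inr ha, Or.inr h⟩)
      rw [h, sub_self, Real.sign_zero, Real.sign_of_pos (by linarith : (0:ℝ) < x1 - z0.re),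
        Real.sign_of_pos (by linarith : (0:ℝ) < z0.re - x0),
        Real.sign_of_pos (by linarith : (0:ℝ) < y1 - y0)]
      norm_num
  · rintro ⟨ha, hb⟩
    rcases ha with ha|ha <;> rcases hb with hb|hb <;>
      rw [ha, hb] <;>
      simp only [sub_self, Real.sign_zero] <;>
      rw [Real.sign_of_pos (by linarith : (0:ℝ) < x1 - x0),
        Real.sign_of_pos (by linarith : (0:ℝ) < y1 - y0)] <;>
      norm_num
  · intro h
    push_neg at h
    by_cases h1 : x0 ≤ z0.re
    · by_cases h2 : z0.re ≤ x1
      · by_cases h3 : y0 ≤ z0.im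
        · have h4 := h h1 h2 h3
          rw [Real.sign_of_neg (by linarith : y1 - z0.im < 0),
            Real.sign_of_pos (by linarith : (0:ℝ) < z0.im - y0)]
          norm_num
        · push_neg at h3
          rw [Real.sign_of_pos (by linarith : (0:ℝ) < y1 - z0.im),
            Real.sign_of_neg (by linarith : z0.im - y0 < 0)]
          norm_num
      · push_neg at h2
        rw [Real.sign_of_neg (by linarith : x1 - z0.re < 0),
          Real.sign_of_pos (by linarith : (0:ℝ) < z0.re - x0)]
        norm_num
    · push_neg at h1
      rw [Real.sign_of_pos (by linarith : (0:ℝ) < x1 - z0.re),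
        Real.sign_of_neg (by linarith : z0.re - x0 < 0)]
      norm_num
end
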